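/- arXiv:2511.23446 — 10 statements merged into one kernel-verified Lean document; each statement's English description precedes it below -/
import Mathlib

section
/- Let n ≥ 1 and let X be a real n×2n matrix such that Δ_I(X) = −Δ_{S(I)}(X) for every n-element subset I of {1,…,2n}. Then Δ_I(X) = 0 for every such I; in particular, no matrix of rank n satisfies this condition. -/
open Matrix

/-- `Δ_I(X)`: the determinant of the `n × n` submatrix of the `n × 2n` matrix `X`
formed by the columns indexed by `I` (taken in increasing order); `0` if `I.card ≠ n`. -/
noncomputable def Delta {n : ℕ} (X : Matrix (Fin n) (Fin (2*n)) ℝ)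
    (I : Finset (Fin (2*n))) : ℝ :=
  if h : I.card = n then
    (X.submatrix id (fun j : Fin n => ((I.orderIsoOfFin h j : Fin (2*n))))).det
  else 0

/-- Rotation of column indices by `n` modulo `2n`. -/
def rotIdx (n : ℕ) (i : Fin (2*n)) : Fin (2*n) :=
  ⟨((i : ℕ) + n) % (2*n), Nat.mod_lt _ (Nat.lt_of_le_of_lt (Nat.zero_le _) i.isLt)⟩

/-!
Call `I` a basis when `Δ_I(X) ≠ 0`, i.e. when the columns indexed by `I` form a basis of `ℝⁿ`;
the hypothesis makes `S(I)` a basis whenever `I` is. Among all bases pick `I` containing the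
fewest pairs `{i, ρ i}`. If some pair `{a, ρ a}` lies in `I`, then `a ∉ S(I)`, and basis exchange
against `S(I)` replaces `a` by some `j ∈ S(I) \ I`; as `ρ j ∉ I`, this creates no new pair,
contradicting minimality. Hence `I` contains no pair, so `I ⊆ S(I)`, and equal cardinalities give
`I = S(I)` and `Δ_I = -Δ_I = 0`, a contradiction. A matrix of rank `n` has `n` independent
columns, hence some `Δ_I ≠ 0`.
-/

open Finset Function Submodule

lemma val_rotIdx {n : ℕ} (i : Fin (2*n)) :
    (rotIdx n i : ℕ) = if (i : ℕ) < n then i + n else i - n := by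
  have hi := i.isLt
  split_ifs with h
  · exact Nat.mod_eq_of_lt (by omega)
  · show (i + n) % (2 * n) = i - n
    rw [Nat.mod_eq_sub_mod (by omega), Nat.mod_eq_of_lt (by omega)]
    omega

lemma rotIdx_involutive (n : ℕ) : Involutive (rotIdx n) := by
  intro i
  ext
  rw [val_rotIdx, val_rotIdx]
  split_ifs <;> omega

lemma rotIdx_ne_self {n : ℕ} (i : Fin (2*n)) : rotIdx n i ≠ i := by
  intro h
  have hv := congrArg Fin.val h
  rw [val_rotIdx] at hv
  split_ifs at hv <;> omega

section Exchange

variable {α : Type*} [DecidableEq α] {ρ : α → α}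

lemma Function.Involutive.mem_finset_image_iff (hρ : Involutive ρ) {s : Finset α} {x : α} :
    x ∈ s.image ρ ↔ ρ x ∈ s := by
  refine ⟨fun h => ?_, fun h => mem_image.2 ⟨ρ x, h, hρ x⟩⟩
  obtain ⟨y, hy, rfl⟩ := mem_image.1 h
  rwa [hρ y]

lemma card_filter_insert_erase_lt (hρ : Involutive ρ) (hfix : ∀ x, ρ x ≠ x) {I : Finset α}
    {a j : α} (ha : a ∈ I) (hρa : ρ a ∈ I) (hρj : ρ j ∉ I) :
    #{x ∈ insert j (I.erase a) | ρ x ∈ insert j (I.erase a)} < #{x ∈ I | ρ x ∈ I} := by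
  refine (card_le_card fun x hx => ?_).trans_lt
    (card_erase_lt_of_mem (mem_filter.2 ⟨ha, hρa⟩))
  obtain ⟨hx, hρx⟩ := mem_filter.1 hx
  have hxj : x ≠ j := by
    rintro rfl
    rcases mem_insert.1 hρx with h | h
    · exact hfix x h
    · exact hρj (mem_of_mem_erase h)
  have hρxj : ρ x ≠ j := by
    rintro rfl
    rcases mem_insert.1 hx with h | h
    · exact hfix x h.symm
    · rw [hρ x] at hρj
      exact hρj (mem_of_mem_erase h)
  obtain ⟨hxa, hxI⟩ := mem_erase.1 ((mem_insert.1 hx).resolve_left hxj)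
  exact mem_erase.2 ⟨hxa, mem_filter.2 ⟨hxI, mem_of_mem_erase
    ((mem_insert.1 hρx).resolve_left hρxj)⟩⟩

theorem exists_subset_image_compl_of_exchange [Fintype α] (hρ : Involutive ρ)
    (hfix : ∀ x, ρ x ≠ x) {P : Finset α → Prop}
    (hexch : ∀ I J, P I → P J → ∀ a ∈ I, a ∉ J → ∃ j ∈ J, P (insert j (I.erase a)))
    (hP : ∀ I, P I → P (Iᶜ.image ρ)) {I₀ : Finset α} (h₀ : P I₀) :
    ∃ I, P I ∧ I ⊆ Iᶜ.image ρ := by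
  induction hk : #{x ∈ I₀ | ρ x ∈ I₀} using Nat.strong_induction_on generalizing I₀ with
  | _ k ih =>
  by_cases hsep : ∀ x ∈ I₀, ρ x ∉ I₀
  · exact ⟨I₀, h₀, fun x hx => hρ.mem_finset_image_iff.2 (mem_compl.2 (hsep x hx))⟩
  push Not at hsep
  obtain ⟨a, ha, hρa⟩ := hsep
  obtain ⟨j, hjJ, hPj⟩ := hexch _ _ h₀ (hP _ h₀) a ha
    (by rw [hρ.mem_finset_image_iff, mem_compl, not_not]; exact hρa)
  have hρj : ρ j ∉ I₀ := mem_compl.1 (hρ.mem_finset_image_iff.1 hjJ)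
  exact ih _ (hk ▸ card_filter_insert_erase_lt hρ hfix ha hρa hρj) hPj rfl

end Exchange

section LinearAlgebra

variable {K V ι : Type*} [DivisionRing K] [AddCommGroup V] [Module K V] {v : ι → V}

theorem LinearIndepOn.exists_insert_erase [DecidableEq ι] {I J : Finset ι}
    (hI : LinearIndepOn K v I) (hJ : span K (v '' J) = ⊤) {a : ι} (ha : a ∈ I) (haJ : a ∉ J) :
    ∃ j ∈ J, j ∉ I ∧ LinearIndepOn K v ↑(insert j (I.erase a)) := by
  have hIa : LinearIndepOn K v ↑(I.erase a) := hI.mono (by simp)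
  have hva : v a ∉ span K (v '' ↑(I.erase a)) :=
    hIa.notMem_span_iff.2 ⟨by rwa [← coe_insert, insert_erase ha], by simp⟩
  obtain ⟨j, hjJ, hj⟩ : ∃ j ∈ J, v j ∉ span K (v '' ↑(I.erase a)) := by
    by_contra! h
    have hle : span K (v '' J) ≤ span K (v '' ↑(I.erase a)) :=
      span_le.2 (by rintro _ ⟨j, hj, rfl⟩; exact h j hj)
    exact hva (hle (hJ ▸ mem_top))
  obtain ⟨hins, hjI⟩ := hIa.notMem_span_iff.1 hj
  refine ⟨j, hjJ, fun hj' => hjI (mem_erase.2 ⟨?_, hj'⟩), by simpa using hins⟩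
  rintro rfl
  exact haJ hjJ

theorem LinearIndepOn.span_image_eq_top_of_card_eq_finrank [FiniteDimensional K V]
    {I : Finset ι} (hI : LinearIndepOn K v I) (hcard : #I = Module.finrank K V) :
    span K (v '' I) = ⊤ := by
  rw [Set.image_eq_range]
  exact LinearIndependent.span_eq_top_of_card_eq_finrank' hI (by simpa using hcard)

end LinearAlgebra

theorem Matrix.exists_linearIndepOn_col_card_eq_rank {m n K : Type*} [Fintype n] [Field K]
    (A : Matrix m n K) : ∃ I : Finset n, #I = A.rank ∧ LinearIndepOn K A.col I := by
  classical
  obtain ⟨b, -, -, hspan, hb⟩ :=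
    exists_linearIndepOn_extension (linearIndepOn_empty K A.col) (Set.empty_subset Set.univ)
  refine ⟨b.toFinset, ?_, by simpa using hb⟩
  have hspan_eq : span K (A.col '' b) = span K (Set.range A.col) :=
    le_antisymm (span_mono (Set.image_subset_range _ _))
      (span_le.2 (by simpa [Set.image_univ] using hspan))
  rw [rank_eq_finrank_span_cols, ← hspan_eq, Set.image_eq_range, finrank_span_eq_card hb,
    Set.toFinset_card]

section Delta

variable {n : ℕ} (X : Matrix (Fin n) (Fin (2*n)) ℝ)

lemma card_of_Delta_ne_zero {I : Finset (Fin (2*n))} (h : Delta X I ≠ 0) : #I = n := by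
  by_contra hI
  exact h (dif_neg hI)

lemma Delta_ne_zero_iff {I : Finset (Fin (2*n))} (hI : #I = n) :
    Delta X I ≠ 0 ↔ LinearIndepOn ℝ X.col I := by
  rw [Delta, dif_pos hI, ← isUnit_iff_ne_zero, ← isUnit_iff_isUnit_det,
    ← linearIndependent_cols_iff_isUnit]
  exact linearIndependent_equiv' (I.orderIsoOfFin hI).toEquiv rfl

theorem exists_Delta_insert_erase_ne_zero (I J : Finset (Fin (2*n))) (hI : Delta X I ≠ 0)
    (hJ : Delta X J ≠ 0) (a : Fin (2*n)) (ha : a ∈ I) (haJ : a ∉ J) :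
    ∃ j ∈ J, Delta X (insert j (I.erase a)) ≠ 0 := by
  have hIcard := card_of_Delta_ne_zero X hI
  have hJcard := card_of_Delta_ne_zero X hJ
  obtain ⟨j, hjJ, hjI, hli⟩ := ((Delta_ne_zero_iff X hIcard).1 hI).exists_insert_erase
    (((Delta_ne_zero_iff X hJcard).1 hJ).span_image_eq_top_of_card_eq_finrank
      (by simpa using hJcard)) ha haJ
  have hcard : #(insert j (I.erase a)) = n := by
    have hpos : 0 < #I := card_pos.2 ⟨a, ha⟩
    rw [card_insert_of_notMem (fun h => hjI (mem_of_mem_erase h)), card_erase_of_mem ha]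
    omega
  exact ⟨j, hjJ, (Delta_ne_zero_iff X hcard).2 hli⟩

end Delta

theorem stmt1_general (n : ℕ) (X : Matrix (Fin n) (Fin (2*n)) ℝ)
    (hneg : ∀ I : Finset (Fin (2*n)), I.card = n →
      Delta X I = - Delta X (Iᶜ.image (rotIdx n))) :
    (∀ I : Finset (Fin (2*n)), I.card = n → Delta X I = 0) ∧ X.rank ≠ n := by
  have hS : ∀ I, Delta X I ≠ 0 → Delta X (Iᶜ.image (rotIdx n)) ≠ 0 := fun I hI h =>
    hI (by rw [hneg I (card_of_Delta_ne_zero X hI), h, neg_zero])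
  have hvanish : ∀ I : Finset (Fin (2*n)), #I = n → Delta X I = 0 := by
    intro I₀ _
    by_contra h₀
    obtain ⟨I, hI, hsub⟩ := exists_subset_image_compl_of_exchange (rotIdx_involutive n)
      rotIdx_ne_self (exists_Delta_insert_erase_ne_zero X) hS h₀
    have hself : Iᶜ.image (rotIdx n) = I := (eq_of_subset_of_card_le hsub (by
      rw [card_of_Delta_ne_zero X hI, card_of_Delta_ne_zero X (hS I hI)])).symm
    have hanti := hneg I (card_of_Delta_ne_zero X hI)
    rw [hself] at hanti
    exact hI (by linarith)
  refine ⟨hvanish, fun hrank => ?_⟩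
  obtain ⟨I, hI, hli⟩ := X.exists_linearIndepOn_col_card_eq_rank
  exact (Delta_ne_zero_iff X (hI.trans hrank)).2 hli (hvanish I (hI.trans hrank))

theorem stmt1 (n : ℕ) (hn : 1 ≤ n) (X : Matrix (Fin n) (Fin (2*n)) ℝ)
    (hneg : ∀ I : Finset (Fin (2*n)), I.card = n →
      Delta X I = - Delta X (Iᶜ.image (rotIdx n))) :
    (∀ I : Finset (Fin (2*n)), I.card = n → Delta X I = 0) ∧ X.rank ≠ n :=
  stmt1_general n X hneg
end

section
/- Let M be an n×n real matrix. Then σ(M)·R·σ(M)ᵀ = 0 if and only if M is symmetric with respect to its antidiagonal, i.e. M_{i,n+1−j} = M_{j,n+1−i} for all 1 ≤ i, j ≤ n. -/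
open Matrix

/-- The Gram matrix of the form `R(x,y) = Σ_{i=1}^n (−1)^{i−1}(x_i y_{n+i} − x_{n+i} y_i)`,
with `0`-based indices. -/
def Rmat (n : ℕ) : Matrix (Fin (2*n)) (Fin (2*n)) ℝ := fun i j =>
  if (j : ℕ) = (i : ℕ) + n then (-1 : ℝ) ^ (i : ℕ)
  else if (i : ℕ) = (j : ℕ) + n then -(-1 : ℝ) ^ (j : ℕ)
  else 0

/-- `σ(M) = (Iₙ | M')` where `M'` is obtained from `M` by reversing the rows and
negating the even-numbered rows: `M'_{ij} = (−1)^{i−1} M_{n+1−i,j}` (1-based). -/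
def sigmaMat {n : ℕ} (M : Matrix (Fin n) (Fin n) ℝ) : Matrix (Fin n) (Fin (2*n)) ℝ :=
  fun i j =>
    if h : (j : ℕ) < n then (if (i : ℕ) = (j : ℕ) then 1 else 0)
    else (-1 : ℝ) ^ (i : ℕ) * M (Fin.rev i) ⟨(j : ℕ) - n, by have := j.isLt; omega⟩

lemma sigmaR_apply {n : ℕ} (M : Matrix (Fin n) (Fin n) ℝ) (i : Fin n) (k : Fin (2*n)) :
    (sigmaMat M * Rmat n) i k =
      if h : (k:ℕ) < n then -(-1:ℝ)^((i:ℕ)+(k:ℕ)) * M (Fin.rev i) ⟨(k:ℕ), h⟩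
      else if (k:ℕ) = (i:ℕ) + n then (-1:ℝ)^(i:ℕ) else 0 := by
  have hi := i.isLt
  have hk := k.isLt
  rw [Matrix.mul_apply]
  by_cases h : (k:ℕ) < n
  · rw [Finset.sum_eq_single (⟨(k:ℕ)+n, by omega⟩ : Fin (2*n))]
    · simp only [sigmaMat, Rmat, h, dif_pos]
      have h1 : ¬ ((k:ℕ)+n < n) := by omega
      have h2 : ¬ ((k:ℕ) = (k:ℕ)+n+n) := by omega
      have h3 : (k:ℕ)+n = (k:ℕ)+n := rfl
      simp only [h1, dif_neg, not_false_iff, h2, if_false, h3, if_true, dif_pos h]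
      have h4 : ((k:ℕ)+n) - n = (k:ℕ) := by omega
      simp only [h4, Fin.eta]
      rw [pow_add]
      ring
    · intro j _ hj
      have hj' : (j:ℕ) ≠ (k:ℕ)+n := fun hc => hj (Fin.ext hc)
      have e1 : ¬ ((k:ℕ) = (j:ℕ) + n) := by omega
      have e2 : ¬ ((j:ℕ) = (k:ℕ) + n) := hj'
      simp only [Rmat, e1, if_false, e2, mul_zero]
    · intro hmem; exact absurd (Finset.mem_univ _) hmem
  · rw [Finset.sum_eq_single (⟨(k:ℕ)-n, by omega⟩ : Fin (2*n))]
    · have h1 : ((k:ℕ)-n) < n := by omega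
      have h2 : (k:ℕ) = ((k:ℕ)-n) + n := by omega
      simp only [sigmaMat, Rmat, dif_neg h, dif_pos h1]
      by_cases h3 : (i:ℕ) = (k:ℕ)-n
      · have h4 : (k:ℕ) = (i:ℕ) + n := by omega
        have h5 : (k:ℕ)-n = (i:ℕ) := h3.symm
        rw [if_pos h3, if_pos h2, if_pos h4, one_mul, h5]
      · have h4 : ¬ ((k:ℕ) = (i:ℕ) + n) := by omega
        rw [if_neg h3, if_neg h4, zero_mul]
    · intro j _ hj
      have hj' : (j:ℕ) ≠ (k:ℕ)-n := fun hc => hj (Fin.ext hc)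
      have hjlt := j.isLt
      have e1 : ¬ ((k:ℕ) = (j:ℕ) + n) := by omega
      have e2 : ¬ ((j:ℕ) = (k:ℕ) + n) := by omega
      simp only [Rmat, e1, if_false, e2, mul_zero]
    · intro hmem; exact absurd (Finset.mem_univ _) hmem

lemma key {n : ℕ} (M : Matrix (Fin n) (Fin n) ℝ) (i l : Fin n) :
    (sigmaMat M * Rmat n * (sigmaMat M)ᵀ) i l
      = (-1:ℝ)^((i:ℕ)+(l:ℕ)) * (M (Fin.rev l) i - M (Fin.rev i) l) := by
  have hi := i.isLt
  have hl := l.isLt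
  rw [Matrix.mul_apply]
  have ha : (⟨(l:ℕ), by omega⟩ : Fin (2*n)) ∈ Finset.univ := Finset.mem_univ _
  have hb : (⟨(i:ℕ)+n, by omega⟩ : Fin (2*n)) ∈ Finset.univ := Finset.mem_univ _
  have hab : (⟨(l:ℕ), by omega⟩ : Fin (2*n)) ≠ ⟨(i:ℕ)+n, by omega⟩ := by
    simp only [ne_eq, Fin.mk.injEq]
    omega
  rw [Finset.sum_eq_add_of_mem _ _ ha hb hab]
  · rw [sigmaR_apply, sigmaR_apply]
    have h1 : ( (⟨(l:ℕ), by omega⟩ : Fin (2*n)) : ℕ) < n := hl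
    have h2 : ¬ (((⟨(i:ℕ)+n, by omega⟩ : Fin (2*n)) : ℕ) < n) := by simp
    simp only [dif_pos h1, dif_neg h2]
    simp only [Matrix.transpose_apply, sigmaMat, dif_pos h1, dif_neg h2]
    have h4 : (i:ℕ)+n-n = (i:ℕ) := by omega
    simp only [if_true, h4, Fin.eta]
    rw [pow_add]
    ring
  · intro c _ hc12
    obtain ⟨hc1, hc2⟩ := hc12
    rw [sigmaR_apply]
    by_cases h : (c:ℕ) < n
    · have : (l:ℕ) ≠ (c:ℕ) := by
        intro hc; exact hc1 (by apply Fin.ext; simp [← hc])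
      simp only [dif_pos h, Matrix.transpose_apply, sigmaMat, dif_pos h, this, if_false, mul_zero]
    · have : ¬ ((c:ℕ) = (i:ℕ) + n) := by
        intro hc; exact hc2 (by apply Fin.ext; simp [hc])
      simp only [dif_neg h, this, if_false, zero_mul]

/-- `σ(M)·R·σ(M)ᵀ = 0` iff `M` is symmetric with respect to its antidiagonal,
i.e. `M_{i,n+1−j} = M_{j,n+1−i}` for all `i, j` (1-based). -/
theorem stmt2 (n : ℕ) (M : Matrix (Fin n) (Fin n) ℝ) :
    sigmaMat M * Rmat n * (sigmaMat M)ᵀ = 0 ↔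
      ∀ i j : Fin n, M i (Fin.rev j) = M j (Fin.rev i) := by
  constructor
  · intro h i j
    have h2 := congrFun (congrFun h (Fin.rev j)) (Fin.rev i)
    rw [key] at h2
    simp only [Matrix.zero_apply] at h2
    have hp : ((-1:ℝ)^(((Fin.rev j):ℕ)+((Fin.rev i):ℕ))) ≠ 0 := by
      positivity
    have := (mul_eq_zero.mp h2).resolve_left hp
    have := sub_eq_zero.mp this
    simpa [Fin.rev_rev] using this
  · intro h
    ext i l
    rw [key]
    have h2 := h (Fin.rev l) (Fin.rev i)
    simp only [Fin.rev_rev] at h2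
    rw [h2]
    simp
end

section
/- Let X be a real n×2n matrix of rank n with Δ_I(X) ≥ 0 for every n-element subset I of {1,…,2n} and with X·R·Xᵀ = 0. Extend the columns of X to a 2n-periodic family (c_j)_{j∈ℤ}, where c_j is the column of X whose index is the representative of j mod 2n in {1,…,2n}, and define f : ℤ → ℤ by f(i) = min{ j ≥ i : c_i ∈ span_ℝ{c_{i+1},…,c_j} } (this minimum exists since the columns of X span ℝⁿ, so j = i+2n always works). Then f(f(i)−n) = i+n for all i ∈ ℤ; that is, the map i ↦ f(i)−n is an involution of ℤ. -/
open Matrix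

/-!
Since `X` has rank `n` and `X R Xᵀ = 0`, the kernel of `X` is the column space of `R Xᵀ`
(a dimension count, `R` being invertible), and row `k` of `R Xᵀ` is a nonzero multiple of
column `k ± n` of `X`. So, up to nonzero scalars, the columns shifted by `n` are a Gale dual of
the columns, and matroid duality turns "`c a` lies in the span of `c (a + 1), …, c b`" into
"`c (a + n)` does not lie in the span of `c (b - n + 1), …, c (a + n - 1)`" whenever
`a ≤ b < a + 2n`. Applying this at `a = f i - n` with `b = i + n` and `b = i + n - 1`, together
with the exchange lemma for `c i` and `c (f i)`, gives `f (f i - n) = i + n`.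
-/

open Set Submodule

section GaleDuality

variable {K V W ι : Type*} [AddCommGroup V] [AddCommGroup W] [Fintype ι]

theorem mem_span_image_iff_exists_relation [DivisionRing K] [Module K V] (c : ι → V) {t : ι}
    {S : Set ι} (ht : t ∉ S) :
    c t ∈ span K (c '' S) ↔
      ∃ w : ι → K, ∑ k, w k • c k = 0 ∧ w t ≠ 0 ∧ ∀ k ∉ insert t S, w k = 0 := by
  classical
  constructor
  · intro h
    obtain ⟨l, hl, hlc⟩ := (Finsupp.mem_span_image_iff_linearCombination K).mp h
    have hl0 : ∀ k ∉ S, l k = 0 := fun k hk => Finsupp.notMem_support_iff.mp fun h => hk (hl h)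
    refine ⟨⇑l - Pi.single t 1, ?_, by simp [hl0 t ht], fun k hk => ?_⟩
    · simp [sub_smul, Finset.sum_sub_distrib, ← hlc, Finsupp.linearCombination_apply,
        Finsupp.sum_fintype]
    · rw [mem_insert_iff, not_or] at hk
      simp [hl0 k hk.2, hk.1]
  · rintro ⟨w, hw, hwt, hsupp⟩
    have hwc : w t • c t = -∑ k ∈ Finset.univ.erase t, w k • c k := by
      rw [eq_neg_iff_add_eq_zero, Finset.add_sum_erase _ (fun k => w k • c k) (Finset.mem_univ t),
        hw]
    rw [← smul_mem_iff _ hwt, hwc]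
    refine neg_mem (sum_mem fun k hk => ?_)
    by_cases hkS : k ∈ S
    · exact smul_mem _ _ (subset_span (mem_image_of_mem c hkS))
    · rw [hsupp k (by simp [Finset.ne_of_mem_erase hk, hkS]), zero_smul]
      exact zero_mem _

theorem Submodule.span_image_smul_of_ne_zero [DivisionRing K] [Module K V] {α : Type*}
    {s : α → K} (hs : ∀ j, s j ≠ 0) (v : α → V) (I : Set α) :
    span K ((fun j => s j • v j) '' I) = span K (v '' I) := by
  apply le_antisymm <;> rw [span_le] <;> rintro _ ⟨j, hj, rfl⟩
  · exact smul_mem _ _ (subset_span (mem_image_of_mem v hj))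
  · exact (smul_mem_iff _ (hs j)).mp (subset_span (mem_image_of_mem (fun j => s j • v j) hj))

variable [Field K] [Module K V] [Module K W]

variable (K) in
def IsGaleDual (c : ι → V) (d : ι → W) : Prop :=
  ∀ w : ι → K, ∑ k, w k • c k = 0 ↔ ∃ φ : Module.Dual K W, ∀ k, φ (d k) = w k

theorem IsGaleDual.mem_span_image_iff_notMem_span_image_compl {c : ι → V} {d : ι → W}
    (h : IsGaleDual K c d) {t : ι} {S : Set ι} (ht : t ∉ S) :
    c t ∈ span K (c '' S) ↔ d t ∉ span K (d '' (insert t S)ᶜ) := by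
  rw [mem_span_image_iff_exists_relation c ht]
  constructor
  · rintro ⟨w, hw, hwt, hsupp⟩ hdt
    obtain ⟨φ, hφ⟩ := (h w).mp hw
    have hker : span K (d '' (insert t S)ᶜ) ≤ LinearMap.ker φ := span_le.mpr <| by
      rintro _ ⟨k, hk, rfl⟩
      simp [hφ, hsupp k hk]
    exact hwt (by rw [← hφ]; exact hker hdt)
  · intro hdt
    obtain ⟨φ, hφt, hφ⟩ := exists_dual_map_eq_bot_of_notMem hdt inferInstance
    refine ⟨fun k => φ (d k), (h _).mpr ⟨φ, fun _ => rfl⟩, hφt, fun k hk => ?_⟩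
    have : φ (d k) ∈ (span K (d '' (insert t S)ᶜ)).map φ :=
      mem_map_of_mem (subset_span (mem_image_of_mem d hk))
    rwa [hφ, mem_bot] at this

theorem Matrix.isGaleDual_of_mul_eq_zero {m p : Type*} [Fintype p] (A : Matrix m ι K)
    (B : Matrix ι p K) (hAB : A * B = 0) (hrank : A.rank + B.rank = Fintype.card ι) :
    IsGaleDual K (fun k => Aᵀ k) (fun k => B k) := by
  classical
  have hle : LinearMap.range B.mulVecLin ≤ LinearMap.ker A.mulVecLin := by
    rintro _ ⟨u, rfl⟩
    simp [mulVec_mulVec, hAB]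
  have hrange : LinearMap.range B.mulVecLin = LinearMap.ker A.mulVecLin := by
    refine eq_of_le_of_finrank_eq hle ?_
    have := LinearMap.finrank_range_add_finrank_ker A.mulVecLin
    rw [Module.finrank_fintype_fun_eq_card] at this
    change B.rank = _
    change A.rank + _ = _ at this
    omega
  intro w
  have hw : ∑ k, w k • Aᵀ k = A *ᵥ w := by
    ext i
    simp [mulVec, dotProduct, Finset.sum_apply, mul_comm]
  rw [hw, ← mulVecLin_apply, ← LinearMap.mem_ker, ← hrange, LinearMap.mem_range,
    (dotProductEquiv K p).surjective.exists]
  simp [funext_iff, mulVec, dotProduct_comm]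

end GaleDuality

namespace Rmat

variable {n : ℕ}

def partner (i : Fin (2*n)) : Fin (2*n) := ⟨(i + n) % (2*n), Nat.mod_lt _ i.pos⟩

lemma partner_partner (i : Fin (2*n)) : partner (partner i) = i := by
  ext
  simp only [partner, Nat.mod_add_mod]
  rw [add_assoc, ← two_mul, Nat.add_mod_right, Nat.mod_eq_of_lt i.isLt]

lemma apply_eq_zero_of_ne_partner {i j : Fin (2*n)} (h : j ≠ partner i) : Rmat n i j = 0 := by
  have hj := j.isLt
  unfold Rmat
  split_ifs with h1 h2
  · exact absurd (Fin.ext (by simp [partner, ← h1, Nat.mod_eq_of_lt hj])) h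
  · refine absurd (Fin.ext ?_) h
    simp only [partner, h2, add_assoc, ← two_mul, Nat.add_mod_right, Nat.mod_eq_of_lt hj]
  · rfl

lemma apply_partner_mul_apply_partner (i : Fin (2*n)) :
    Rmat n i (partner i) * Rmat n (partner i) i = -1 := by
  have hi := i.isLt
  rcases lt_or_ge (i : ℕ) n with h | h
  · have hp : (partner i : ℕ) = i + n := Nat.mod_eq_of_lt (by omega)
    simp only [Rmat, hp, if_true, if_neg (show (i : ℕ) ≠ i + n + n by omega)]
    rw [mul_neg, ← pow_add, ← two_mul, pow_mul, neg_one_sq, one_pow]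
  · have hp : (partner i : ℕ) = i - n := by
      show ((i : ℕ) + n) % (2*n) = i - n
      rw [Nat.mod_eq_sub_mod (by omega), Nat.mod_eq_of_lt (by omega)]
      omega
    simp only [Rmat, hp, if_neg (show (i : ℕ) - n ≠ i + n by omega),
      if_pos (show (i : ℕ) = i - n + n by omega)]
    rw [neg_mul, ← pow_add, ← two_mul, pow_mul, neg_one_sq, one_pow]

lemma apply_partner_ne_zero (i : Fin (2*n)) : Rmat n i (partner i) ≠ 0 :=
  left_ne_zero_of_mul (by rw [apply_partner_mul_apply_partner]; norm_num)

lemma mul_apply {α : Type*} (M : Matrix (Fin (2*n)) α ℝ) (i : Fin (2*n)) :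
    (Rmat n * M) i = Rmat n i (partner i) • M (partner i) := by
  ext k
  rw [Matrix.mul_apply, Finset.sum_eq_single (partner i)
    (fun j _ hj => by rw [apply_eq_zero_of_ne_partner hj, zero_mul]) (by simp)]
  rfl

lemma mul_self : Rmat n * Rmat n = -1 := by
  ext i k
  rw [mul_apply, Pi.smul_apply, smul_eq_mul]
  by_cases hk : k = i
  · subst hk
    simp [apply_partner_mul_apply_partner]
  · rw [apply_eq_zero_of_ne_partner (i := partner i) (by rwa [partner_partner]), mul_zero]
    simp [Matrix.one_apply_ne' hk]

lemma isUnit_det : IsUnit (Rmat n).det :=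
  Matrix.isUnit_det_of_right_inverse (B := -Rmat n) (by rw [mul_neg, mul_self, neg_neg])

end Rmat

section Residue

variable (n : ℕ) [NeZero n]

/-- The `0`-based index of the column `c_j` of the `2n`-periodic extension, the paper's columns
being numbered from `1`. -/
def residue (j : ℤ) : Fin (2*n) :=
  ⟨((j - 1) % (2 * (n : ℤ))).toNat, by
    have := NeZero.pos n
    have := Int.emod_lt_of_pos (j - 1) (by omega : (0 : ℤ) < 2 * n)
    omega⟩

variable {n}

lemma residue_val (j : ℤ) : ((residue n j : ℕ) : ℤ) = (j - 1) % (2 * n) :=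
  Int.toNat_of_nonneg (Int.emod_nonneg _ (by have := NeZero.pos n; omega))

lemma Rmat.partner_residue (j : ℤ) : Rmat.partner (residue n j) = residue n (j + n) := by
  ext
  rw [← Int.natCast_inj, residue_val]
  simp only [Rmat.partner]
  push_cast
  rw [residue_val, Int.emod_add_emod, sub_add_eq_add_sub]

lemma residue_add_two_mul (j : ℤ) : residue n (j + 2 * n) = residue n j := by
  rw [show j + 2 * (n : ℤ) = j + n + n by ring, ← Rmat.partner_residue,
    ← Rmat.partner_residue, Rmat.partner_partner]

lemma residue_eq_residue_iff {j k : ℤ} : residue n j = residue n k ↔ j ≡ k [ZMOD 2 * n] := by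
  rw [Fin.ext_iff, ← Int.natCast_inj, residue_val, residue_val]
  exact ⟨fun h => by simpa using (show j - 1 ≡ k - 1 [ZMOD 2 * n] from h).add_right 1,
    fun h => h.sub_right 1⟩

lemma residue_injOn_Icc {a b : ℤ} (h : b < a + 2 * n) : InjOn (residue n) (Icc a b) := by
  intro j hj k hk hjk
  have := Int.eq_zero_of_abs_lt_dvd (residue_eq_residue_iff.mp hjk).dvd
    (by rw [abs_sub_lt_iff]; grind)
  omega

lemma residue_image_Icc_eq_univ {a b : ℤ} (h : a + 2 * n ≤ b + 1) :
    residue n '' Icc a b = univ := by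
  have hpos : (0 : ℤ) < 2 * n := by have := NeZero.pos n; omega
  refine eq_univ_of_forall fun k => ⟨a + (k + 1 - a) % (2 * n), ?_, ?_⟩
  · have := Int.emod_nonneg (k + 1 - a) hpos.ne'
    have := Int.emod_lt_of_pos (k + 1 - a) hpos
    exact ⟨by omega, by omega⟩
  · rw [Fin.ext_iff, ← Int.natCast_inj, residue_val]
    have hk : ((k : ℕ) : ℤ) < 2 * n := by exact_mod_cast k.isLt
    calc (a + (k + 1 - a) % (2 * n) - 1) % (2 * n) = (a + (k + 1 - a) - 1) % (2 * n) :=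
          ((Int.mod_modEq _ _).add_left a).sub_right 1
      _ = k := by
        rw [show a + (k + 1 - a) - 1 = (k : ℤ) by ring]
        exact Int.emod_eq_of_lt (by omega) hk

lemma residue_image_Icc_compl {a b : ℤ} (hab : a ≤ b) (hba : b < a + 2 * n) :
    (residue n '' Icc a b)ᶜ = residue n '' Icc (b - 2 * n + 1) (a - 1) := by
  have hwindow : InjOn (residue n) (Icc (b - 2 * n + 1) b) := residue_injOn_Icc (by omega)
  rw [compl_eq_univ_sdiff, ← residue_image_Icc_eq_univ (a := b - 2 * n + 1) (b := b) (by omega),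
    ← hwindow.image_sdiff_subset (Icc_subset_Icc_left (show b - 2 * n + 1 ≤ a by omega))]
  congr 1
  ext j
  simp only [mem_sdiff, mem_Icc]
  omega

variable {R m : Type*}

def Matrix.periodicCol (X : Matrix m (Fin (2*n)) R) (j : ℤ) : m → R := Xᵀ (residue n j)

lemma Matrix.periodicCol_add_two_mul (X : Matrix m (Fin (2*n)) R) (j : ℤ) :
    X.periodicCol (j + 2 * n) = X.periodicCol j := by
  rw [periodicCol, periodicCol, residue_add_two_mul]

end Residue

theorem Matrix.periodicCol_mem_span_iff_of_lagrangian {n : ℕ} [NeZero n]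
    (X : Matrix (Fin n) (Fin (2*n)) ℝ) (hrank : X.rank = n) (hlag : X * Rmat n * Xᵀ = 0)
    {a b : ℤ} (hab : a ≤ b) (hba : b < a + 2 * n) :
    X.periodicCol a ∈ span ℝ (X.periodicCol '' Icc (a + 1) b) ↔
      X.periodicCol (a + n) ∉ span ℝ (X.periodicCol '' Icc (b - n + 1) (a + n - 1)) := by
  have hgale : IsGaleDual ℝ (fun k => Xᵀ k) (fun k => (Rmat n * Xᵀ) k) := by
    refine isGaleDual_of_mul_eq_zero _ _ (by rw [← Matrix.mul_assoc, hlag]) ?_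
    rw [rank_mul_eq_right_of_isUnit_det _ _ Rmat.isUnit_det, rank_transpose, hrank,
      Fintype.card_fin, two_mul]
  have hnot : residue n a ∉ residue n '' Icc (a + 1) b := by
    rintro ⟨j, ⟨hj1, hj2⟩, hja⟩
    have := residue_injOn_Icc hba (x₁ := j) ⟨by omega, hj2⟩
      (x₂ := a) ⟨le_rfl, hab⟩ hja
    omega
  have hcompl : (insert (residue n a) (residue n '' Icc (a + 1) b))ᶜ =
      residue n '' Icc (b - 2 * n + 1) (a - 1) := by
    rw [← image_insert_eq, insert_Icc_add_one_left_eq_Icc hab, residue_image_Icc_compl hab hba]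
  have hrows : ∀ j, (Rmat n * Xᵀ) (residue n j) =
      Rmat n (residue n j) (residue n (j + n)) • X.periodicCol (j + n) := fun j => by
    rw [Rmat.mul_apply, Rmat.partner_residue, periodicCol]
  have hs : ∀ j, Rmat n (residue n j) (residue n (j + n)) ≠ 0 := fun j => by
    rw [← Rmat.partner_residue]
    exact Rmat.apply_partner_ne_zero _
  have hshift : Icc (b - n + 1) (a + n - 1) = (· + (n : ℤ)) '' Icc (b - 2 * n + 1) (a - 1) := by
    rw [image_add_const_Icc]
    congr 1 <;> ring
  have hcols : X.periodicCol a ∈ span ℝ (X.periodicCol '' Icc (a + 1) b) ↔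
      Xᵀ (residue n a) ∈ span ℝ ((fun k => Xᵀ k) '' (residue n '' Icc (a + 1) b)) := by
    rw [image_image]
    rfl
  rw [hcols, hgale.mem_span_image_iff_notMem_span_image_compl hnot, hcompl, image_image]
  simp only [hrows]
  rw [smul_mem_iff _ (hs a), span_image_smul_of_ne_zero hs, hshift, image_image X.periodicCol]

theorem mem_span_image_Icc_exchange {K V : Type*} [DivisionRing K] [AddCommGroup V] [Module K V]
    (c : ℤ → V) {i m : ℤ} (him : i < m) (hmem : c i ∈ span K (c '' Icc (i + 1) m))
    (hprev : c i ∉ span K (c '' Icc (i + 1) (m - 1))) :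
    c m ∈ span K (c '' Icc i (m - 1)) ∧ c m ∉ span K (c '' Icc (i + 1) (m - 1)) := by
  rw [← insert_Icc_sub_one_right_eq_Icc (by omega : i + 1 ≤ m), image_insert_eq] at hmem
  refine ⟨?_, fun h => hprev ?_⟩
  · rw [← insert_Icc_add_one_left_eq_Icc (by omega : i ≤ m - 1), image_insert_eq]
    exact mem_span_insert_exchange hmem hprev
  · rwa [← span_insert_eq_span h]

theorem involutive_sub_of_duality {K V : Type*} [DivisionRing K] [AddCommGroup V]
    [Module K V] (c : ℤ → V) {n : ℤ} (hn : 0 < n) (hper : ∀ j, c (j + 2 * n) = c j)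
    (hdual : ∀ a b, a ≤ b → b < a + 2 * n → (c a ∈ span K (c '' Icc (a + 1) b) ↔
      c (a + n) ∉ span K (c '' Icc (b - n + 1) (a + n - 1))))
    (f : ℤ → ℤ)
    (hf : ∀ i, IsLeast {j | i ≤ j ∧ c i ∈ span K (c '' Icc (i + 1) j)} (f i)) :
    Function.Involutive fun i => f i - n := by
  intro i
  suffices f (f i - n) = i + n by simp only [this, add_sub_cancel_right]
  obtain ⟨⟨him, hmem⟩, hleast⟩ := hf i
  generalize f i = m at him hmem hleast ⊢
  have hmi : m ≤ i + 2 * n :=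
    hleast ⟨by omega, subset_span ⟨i + 2 * n, ⟨by omega, le_rfl⟩, hper i⟩⟩
  have hprev : i < m → c i ∉ span K (c '' Icc (i + 1) (m - 1)) := fun hlt h =>
    absurd (hleast ⟨by omega, h⟩) (by omega)
  have hback : c m ∈ span K (c '' Icc i (m - 1)) := by
    rcases him.eq_or_lt with rfl | hlt
    · rwa [Icc_eq_empty (by omega), ← Icc_eq_empty (show ¬ i + 1 ≤ i by omega)]
    · exact (mem_span_image_Icc_exchange c hlt hmem (hprev hlt)).1
  refine (hf (m - n)).unique ⟨⟨by omega, ?_⟩, fun j ⟨hj, hjmem⟩ => ?_⟩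
  · rcases him.eq_or_lt with rfl | hlt
    · refine subset_span ⟨i + n, ⟨by omega, le_rfl⟩, ?_⟩
      rw [← hper (i - n)]
      congr 1
      ring
    · have := hdual (m - n) (i + n) (by omega) (by omega)
      rw [sub_add_cancel, add_sub_cancel_right] at this
      exact this.mpr (mem_span_image_Icc_exchange c hlt hmem (hprev hlt)).2
  · by_contra! hji
    have := hdual (m - n) (i + n - 1) (by omega) (by omega)
    rw [sub_add_cancel, show i + n - 1 - n + 1 = i by ring] at this
    exact this.mp (span_mono (image_mono (Icc_subset_Icc_right (by omega))) hjmem) hback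

/-- If `X` is a totally nonnegative Lagrangian `n × 2n` matrix of rank `n`, `col j` is the
`2n`-periodic extension of its columns, and `f i` is the least `j ≥ i` such that column `i`
lies in the span of columns `i+1, …, j`, then `i ↦ f i − n` is an involution of `ℤ`. -/
theorem stmt4 (n : ℕ) (hn : 1 ≤ n) (X : Matrix (Fin n) (Fin (2*n)) ℝ)
    (hrank : X.rank = n)
    (hlag : X * Rmat n * Xᵀ = 0)
    (col : ℤ → Fin n → ℝ)
    (hcol : ∀ j : ℤ, col j = fun r =>
      X r ⟨((j - 1) % (2 * (n : ℤ))).toNat, by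
        have hpos : (0 : ℤ) < 2 * (n : ℤ) := by omega
        have h1 := Int.emod_nonneg (j - 1) (ne_of_gt hpos)
        have h2 := Int.emod_lt_of_pos (j - 1) hpos
        omega⟩)
    (f : ℤ → ℤ)
    (hf : ∀ i : ℤ, IsLeast
      {j : ℤ | i ≤ j ∧ col i ∈ Submodule.span ℝ (col '' Set.Icc (i + 1) j)} (f i)) :
    ∀ i : ℤ, f (f i - n) = i + n := by
  have : NeZero n := ⟨by omega⟩
  obtain rfl : col = X.periodicCol := funext hcol
  have hinv := involutive_sub_of_duality X.periodicCol (by omega) X.periodicCol_add_two_mul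
    (fun a b hab hba => X.periodicCol_mem_span_iff_of_lagrangian hrank hlag hab hba) f hf
  exact fun i => eq_add_of_sub_eq (hinv i)
end

section
/- Let f be a ρ-symmetric bounded affine permutation of type (n,2n), and let (i,j) be a pair of integers with i < j ≤ f(j) < f(i) (an alignment of f). Then the pair (f(j)+n, f(i)+n) is again an alignment of f; that is, f(j)+n < f(i)+n ≤ f(f(i)+n) < f(f(j)+n). -/
/-! Periodicity and ρ-symmetry give `f (f k + n) = k + 3n`, so the new pair is sent by `f` to
`(i + 3n, j + 3n)`, and the alignment conditions reduce to `i < j` and `f i ≤ i + 2n`. -/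

theorem apply_apply_add_eq_add_three_mul {n : ℤ} {f : ℤ → ℤ}
    (hper : ∀ i, f (i + 2 * n) = f i + 2 * n) (hsym : ∀ i, f (f i - n) = i + n) (k : ℤ) :
    f (f k + n) = k + 3 * n := by
  calc f (f k + n) = f ((f k - n) + 2 * n) := by ring_nf
    _ = k + 3 * n := by rw [hper, hsym]; ring

theorem stmt5_general (n : ℕ) (f : ℤ → ℤ)
    (hper : ∀ i : ℤ, f (i + 2 * (n : ℤ)) = f i + 2 * (n : ℤ))
    (hbound : ∀ i : ℤ, i ≤ f i ∧ f i ≤ i + 2 * (n : ℤ))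
    (hsym : ∀ i : ℤ, f (f i - (n : ℤ)) = i + (n : ℤ))
    (i j : ℤ) (hij : i < j) (hff : f j < f i) :
    f j + (n : ℤ) < f i + (n : ℤ) ∧
    f i + (n : ℤ) ≤ f (f i + (n : ℤ)) ∧
    f (f i + (n : ℤ)) < f (f j + (n : ℤ)) := by
  have hrho := apply_apply_add_eq_add_three_mul hper hsym
  refine ⟨by omega, ?_, ?_⟩
  · rw [hrho]
    linarith [(hbound i).2]
  · rw [hrho, hrho]
    omega

/-- If `f` is a ρ-symmetric bounded affine permutation of type `(n,2n)` and `(i,j)` is an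
alignment of `f` (i.e. `i < j ≤ f j < f i`), then `(f j + n, f i + n)` is again an
alignment of `f`. -/
theorem stmt5 (n : ℕ) (f : ℤ → ℤ)
    (hbij : Function.Bijective f)
    (hper : ∀ i : ℤ, f (i + 2 * (n : ℤ)) = f i + 2 * (n : ℤ))
    (hbound : ∀ i : ℤ, i ≤ f i ∧ f i ≤ i + 2 * (n : ℤ))
    (hsum : ∑ i ∈ Finset.Icc (1 : ℤ) (2 * (n : ℤ)), (f i - i) = 2 * (n : ℤ) ^ 2)
    (hsym : ∀ i : ℤ, f (f i - (n : ℤ)) = i + (n : ℤ))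
    (i j : ℤ) (hij : i < j) (hjf : j ≤ f j) (hff : f j < f i) :
    f j + (n : ℤ) < f i + (n : ℤ) ∧
    f i + (n : ℤ) ≤ f (f i + (n : ℤ)) ∧
    f (f i + (n : ℤ)) < f (f j + (n : ℤ)) :=
  stmt5_general n f hper hbound hsym i j hij hff
end

section
/- Let f be a ρ-symmetric bounded affine permutation of type (n,2n) and set m = #{i ∈ {1,…,2n} : f(i) = i+n}. Then the number of ρ-central alignments (i,j) of f with 1 ≤ i ≤ 2n equals (2n − m)/2. Equivalently, #{i ∈ {1,…,2n} : f(i) > i+n} = #{i ∈ {1,…,2n} : f(i) < i+n} = (2n − m)/2. -/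
/-!
Put `g i = f i - n`. Then ρ-symmetry says exactly that `g` is an involution of `ℤ`, and it commutes
with translation by `2n`. The ρ-central alignments are the pairs `(i, g i)` with `i < g i`, the
fixed points of `g` are the `i` with `f i = i + n`, and `g i < i` means `f i < i + n`. Reducing
`g i` modulo `2n` pairs the points of a period that `g` moves up with those it moves down, so these
two classes have the same size, and together with the `m` fixed points they fill the `2n` residues.
-/

open Finset

theorem Finset.card_filter_lt_add_card_filter_eq_add_card_filter_gt {α β : Type*}
    [DecidableEq α] [LinearOrder β] (s : Finset α) (a b : α → β) :
    #(s.filter (fun x => a x < b x)) + #(s.filter (fun x => a x = b x)) +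
      #(s.filter (fun x => b x < a x)) = #s := by
  rw [← card_union_of_disjoint, ← card_union_of_disjoint, ← filter_or, ← filter_or,
    filter_true_of_mem fun x _ => by rcases lt_trichotomy (a x) (b x) with h | h | h <;> simp [h]]
  all_goals
    simp only [disjoint_left, mem_union, mem_filter]
    grind

namespace Int

def periodRep (N x : ℤ) : ℤ := (x - 1) % N + 1

variable {N : ℤ}

theorem periodRep_mem_Icc (hN : 0 < N) (x : ℤ) : periodRep N x ∈ Icc 1 N := by
  have := emod_nonneg (x - 1) hN.ne'
  have := emod_lt_of_pos (x - 1) hN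
  simp only [periodRep, mem_Icc]
  omega

theorem periodRep_eq_sub_mul (x : ℤ) : periodRep N x = x - (x - 1) / N * N := by
  rw [periodRep, emod_def]
  ring

theorem periodRep_sub_mul (x q : ℤ) : periodRep N (x - q * N) = periodRep N x := by
  rw [periodRep, show x - q * N - 1 = x - 1 + -q * N by ring, add_mul_emod_self_right]
  rfl

theorem periodRep_of_mem_Icc {x : ℤ} (hx : x ∈ Icc 1 N) : periodRep N x = x := by
  rw [mem_Icc] at hx
  rw [periodRep, emod_eq_of_lt (by omega) (by omega)]
  ring

theorem card_filter_lt_apply_eq_card_filter_apply_lt {g : ℤ → ℤ} (hg : Function.Involutive g)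
    (hper : ∀ x, g (x + N) = g x + N) :
    #((Icc 1 N).filter (fun i => i < g i)) = #((Icc 1 N).filter (fun i => g i < i)) := by
  have hshift (x q : ℤ) : g (x - q * N) = g x - q * N := by
    have hd : Function.Periodic (fun x => g x - x) N := fun x => by simp [hper]
    have := hd.sub_int_mul_eq (x := x) q
    rw [cast_id] at this
    linarith
  -- `periodRep N ∘ g` is an involution of the period that reverses the sign of `g i - i`
  have hsign (i : ℤ) : g (periodRep N (g i)) - periodRep N (g i) = i - g i := by
    rw [periodRep_eq_sub_mul, hshift, hg]
    ring
  have hinv (i : ℤ) (hi : i ∈ Icc 1 N) : periodRep N (g (periodRep N (g i))) = i := by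
    rw [periodRep_eq_sub_mul (g i), hshift, hg, periodRep_sub_mul, periodRep_of_mem_Icc hi]
  have hmaps (i : ℤ) (hi : i ∈ Icc 1 N) : periodRep N (g i) ∈ Icc 1 N :=
    periodRep_mem_Icc (by rw [mem_Icc] at hi; omega) _
  refine card_bij' (fun i _ => periodRep N (g i)) (fun i _ => periodRep N (g i)) ?_ ?_ ?_ ?_
  · intro i hi
    rw [mem_filter] at hi ⊢
    exact ⟨hmaps i hi.1, by linarith [hsign i]⟩
  · intro i hi
    rw [mem_filter] at hi ⊢
    exact ⟨hmaps i hi.1, by linarith [hsign i]⟩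
  · exact fun i hi => hinv i (mem_filter.1 hi).1
  · exact fun i hi => hinv i (mem_filter.1 hi).1

end Int

section RhoSymmetric

variable {n : ℤ} {f : ℤ → ℤ}

def rhoCentralAlignments (n : ℤ) (f : ℤ → ℤ) : Set (ℤ × ℤ) :=
  {p | 1 ≤ p.1 ∧ p.1 ≤ 2 * n ∧ p.1 < p.2 ∧ p.2 ≤ f p.2 ∧ f p.2 < f p.1 ∧ f p.1 = p.2 + n}

theorem involutive_sub_of_rho_symmetric (hsym : ∀ i, f (f i - n) = i + n) :
    Function.Involutive (fun i => f i - n) := fun i => by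
  simp only [hsym]
  ring

theorem rhoCentralAlignments_eq_image (hsym : ∀ i, f (f i - n) = i + n)
    (hle : ∀ i, f i ≤ i + 2 * n) :
    rhoCentralAlignments n f =
      ((Icc 1 (2 * n)).filter (fun i => i + n < f i)).image (fun i => (i, f i - n)) := by
  ext ⟨i, j⟩
  simp only [rhoCentralAlignments, Set.mem_ofPred_eq, coe_image, coe_filter, Set.mem_image,
    mem_Icc, Prod.mk.injEq]
  constructor
  · rintro ⟨h1, h2, h3, -, -, h4⟩
    exact ⟨i, ⟨⟨h1, h2⟩, by omega⟩, rfl, by omega⟩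
  · rintro ⟨i, ⟨⟨h1, h2⟩, h3⟩, rfl, rfl⟩
    have := hle i
    rw [hsym i]
    omega

theorem ncard_rhoCentralAlignments (hsym : ∀ i, f (f i - n) = i + n)
    (hle : ∀ i, f i ≤ i + 2 * n) :
    (rhoCentralAlignments n f).ncard = #((Icc 1 (2 * n)).filter (fun i => i + n < f i)) := by
  rw [rhoCentralAlignments_eq_image hsym hle, Set.ncard_coe_finset]
  exact card_image_of_injective _ fun a b h => congrArg Prod.fst h

end RhoSymmetric

theorem stmt6_general (n : ℕ) (f : ℤ → ℤ)
    (hper : ∀ i : ℤ, f (i + 2 * (n : ℤ)) = f i + 2 * (n : ℤ))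
    (hbound : ∀ i : ℤ, i ≤ f i ∧ f i ≤ i + 2 * (n : ℤ))
    (hsym : ∀ i : ℤ, f (f i - (n : ℤ)) = i + (n : ℤ))
    (m : ℕ)
    (hm : m = ((Finset.Icc (1 : ℤ) (2 * (n : ℤ))).filter
      (fun i => f i = i + (n : ℤ))).card) :
    {p : ℤ × ℤ | 1 ≤ p.1 ∧ p.1 ≤ 2 * (n : ℤ) ∧ p.1 < p.2 ∧ p.2 ≤ f p.2 ∧
        f p.2 < f p.1 ∧ f p.1 = p.2 + (n : ℤ)}.ncard = (2 * n - m) / 2 ∧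
    ((Finset.Icc (1 : ℤ) (2 * (n : ℤ))).filter
      (fun i => i + (n : ℤ) < f i)).card = (2 * n - m) / 2 ∧
    ((Finset.Icc (1 : ℤ) (2 * (n : ℤ))).filter
      (fun i => f i < i + (n : ℤ))).card = (2 * n - m) / 2 := by
  set up := (Icc (1 : ℤ) (2 * n)).filter (fun i => i + (n : ℤ) < f i)
  set down := (Icc (1 : ℤ) (2 * n)).filter (fun i => f i < i + (n : ℤ))
  have hbalance : #up = #down := by
    have := Int.card_filter_lt_apply_eq_card_filter_apply_lt
      (involutive_sub_of_rho_symmetric hsym) (fun i => by rw [hper]; ring)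
    convert this using 2 <;> exact filter_congr fun i _ => by omega
  have hpartition : #down + m + #up = 2 * n := by
    rw [hm, card_filter_lt_add_card_filter_eq_add_card_filter_gt, Int.card_Icc]
    omega
  have hcentral : (rhoCentralAlignments n f).ncard = #up :=
    ncard_rhoCentralAlignments hsym fun i => (hbound i).2
  exact ⟨hcentral.trans (by omega), by omega, by omega⟩

/-- For a ρ-symmetric bounded affine permutation `f` of type `(n,2n)` with
`m = #{i ∈ [1,2n] : f i = i + n}`, the number of ρ-central alignments `(i,j)`
with `1 ≤ i ≤ 2n` equals `(2n − m)/2`; equivalently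
`#{i ∈ [1,2n] : f i > i + n} = #{i ∈ [1,2n] : f i < i + n} = (2n − m)/2`. -/
theorem stmt6 (n : ℕ) (f : ℤ → ℤ)
    (hbij : Function.Bijective f)
    (hper : ∀ i : ℤ, f (i + 2 * (n : ℤ)) = f i + 2 * (n : ℤ))
    (hbound : ∀ i : ℤ, i ≤ f i ∧ f i ≤ i + 2 * (n : ℤ))
    (hsum : ∑ i ∈ Finset.Icc (1 : ℤ) (2 * (n : ℤ)), (f i - i) = 2 * (n : ℤ) ^ 2)
    (hsym : ∀ i : ℤ, f (f i - (n : ℤ)) = i + (n : ℤ))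
    (m : ℕ)
    (hm : m = ((Finset.Icc (1 : ℤ) (2 * (n : ℤ))).filter
      (fun i => f i = i + (n : ℤ))).card) :
    {p : ℤ × ℤ | 1 ≤ p.1 ∧ p.1 ≤ 2 * (n : ℤ) ∧ p.1 < p.2 ∧ p.2 ≤ f p.2 ∧
        f p.2 < f p.1 ∧ f p.1 = p.2 + (n : ℤ)}.ncard = (2 * n - m) / 2 ∧
    ((Finset.Icc (1 : ℤ) (2 * (n : ℤ))).filter
      (fun i => i + (n : ℤ) < f i)).card = (2 * n - m) / 2 ∧
    ((Finset.Icc (1 : ℤ) (2 * (n : ℤ))).filter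
      (fun i => f i < i + (n : ℤ))).card = (2 * n - m) / 2 :=
  stmt6_general n f hper hbound hsym m hm
end

section
/- Let f be a ρ-symmetric bounded affine permutation of type (n,2n) and set m = #{i ∈ {1,…,2n} : f(i) = i+n} (m is even). Then 2·σℓ(f) = ℓ(f) + n − m/2. Equivalently, setting d(f) := n² − ℓ(f) and σdim(f) := n(n+1)/2 − σℓ(f), one has d(f) = 2·σdim(f) − m/2. -/
/-!
The mirror map is an involution of the finite set of alignments, so `ℓ(f)` plus the number of
self-mirror alignments is `2 σℓ(f)`. The self-mirror alignments are the pairs `(i, f i - n)` with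
`i + n < f i`. Periodicity and ρ-symmetry give `f y - y = 2n - (f x - x)` whenever
`y ≡ f x + n (mod 2n)`, so reducing `f i + n` into `{1, …, 2n}` is an involution of `{1, …, 2n}`
exchanging the `i` with `f i - i > n` and those with `f i - i < n`. The remaining `m` indices have
`f i - i = n`, hence there are `n - m/2` self-mirror alignments.
-/

/-- The set of alignments `(i,j)` of `f` with `1 ≤ i ≤ 2n`: pairs with `i < j ≤ f j < f i`. -/
def alignSet (n : ℕ) (f : ℤ → ℤ) : Set (ℤ × ℤ) :=
  {p | 1 ≤ p.1 ∧ p.1 ≤ 2 * (n : ℤ) ∧ p.1 < p.2 ∧ p.2 ≤ f p.2 ∧ f p.2 < f p.1}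

/-- The mirror map on alignments of a ρ-symmetric `f`: `(i,j)` is sent to the pair obtained
from `(f j + n, f i + n)` by adding to both coordinates the unique multiple of `2n`
placing the first coordinate in `{1, …, 2n}`. -/
def mirror (n : ℕ) (f : ℤ → ℤ) (p : ℤ × ℤ) : ℤ × ℤ :=
  ((f p.2 + (n : ℤ) - 1) % (2 * (n : ℤ)) + 1,
   f p.1 + (n : ℤ) + (((f p.2 + (n : ℤ) - 1) % (2 * (n : ℤ)) + 1) - (f p.2 + (n : ℤ))))

/-- `ℓ(f)`: the number of alignments `(i,j)` of `f` with `1 ≤ i ≤ 2n`. -/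
noncomputable def lenBAP (n : ℕ) (f : ℤ → ℤ) : ℕ := (alignSet n f).ncard

/-- `σℓ(f)`: the number of orbits of the mirror involution on the alignments of `f`;
a pair of distinct mirrored alignments counts once and each self-mirror alignment
counts once, so it equals `(#alignments + #self-mirror alignments)/2`. -/
noncomputable def sigmaL (n : ℕ) (f : ℤ → ℤ) : ℕ :=
  ((alignSet n f).ncard + {p ∈ alignSet n f | mirror n f p = p}.ncard) / 2

open Finset

theorem Set.Finite.even_ncard_add_ncard_fixed {α : Type*} {s : Set α} (hs : s.Finite)
    {g : α → α} (hmaps : Set.MapsTo g s s) (hinv : ∀ a ∈ s, g (g a) = a) :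
    Even (s.ncard + {a ∈ s | g a = a}.ncard) := by
  classical
  obtain ⟨t, rfl⟩ := hs.exists_finset_coe
  have hfixed : {a ∈ (t : Set α) | g a = a} = ↑{a ∈ t | g a = a} := by ext; simp
  have hmoved : Even #{a ∈ t | ¬g a = a} := by
    have h := prod_involution (s := {a ∈ t | ¬g a = a}) (f := fun _ => (-1 : ℤ))
      (fun a _ => g a) (fun _ _ => by norm_num) (fun a ha _ => (mem_filter.mp ha).2)
      (fun a ha => by
        obtain ⟨hat, hga⟩ := mem_filter.mp ha
        exact mem_filter.mpr ⟨hmaps hat, by rw [hinv a hat]; exact fun h => hga h.symm⟩)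
      (fun a ha => hinv a (mem_filter.mp ha).1)
    rw [prod_const] at h
    exact (neg_one_pow_eq_one_iff_even (by norm_num)).mp h
  rw [hfixed, Set.ncard_coe_finset, Set.ncard_coe_finset,
    ← card_filter_add_card_filter_not (s := t) (fun a => g a = a)]
  obtain ⟨k, hk⟩ := hmoved
  exact ⟨#{a ∈ t | g a = a} + k, by omega⟩

theorem Finset.card_filter_lt_add_card_filter_eq_add_card_filter_gt_s7 {ι α : Type*}
    [LinearOrder α] (s : Finset ι) (u v : ι → α) :
    #{i ∈ s | u i < v i} + #{i ∈ s | u i = v i} + #{i ∈ s | v i < u i} = #s := by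
  rw [add_assoc, ← card_filter_add_card_filter_not (s := s) (fun i => u i < v i),
    ← card_filter_add_card_filter_not (s := {i ∈ s | ¬u i < v i}) (fun i => u i = v i),
    filter_filter, filter_filter]
  congr 3 <;> ext i <;> simp only [mem_filter] <;> grind

def reprMod (N x : ℤ) : ℤ := (x - 1) % N + 1

theorem reprMod_modEq (N x : ℤ) : reprMod N x ≡ x [ZMOD N] := by
  simpa [reprMod] using (Int.mod_modEq (x - 1) N).add_right 1

theorem reprMod_mem_Icc {N : ℤ} (hN : 0 < N) (x : ℤ) : reprMod N x ∈ Set.Icc 1 N := by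
  have h0 := Int.emod_nonneg (x - 1) hN.ne'
  have hlt := Int.emod_lt_of_pos (x - 1) hN
  constructor <;> unfold reprMod <;> omega

theorem reprMod_eq_of_modEq {N x y : ℤ} (hy : y ∈ Set.Icc 1 N) (h : y ≡ x [ZMOD N]) :
    reprMod N x = y := by
  have hxy : (x - 1) % N = (y - 1) % N := (h.sub_right 1).symm
  rw [reprMod, hxy, Int.emod_eq_of_lt] <;> grind

theorem sub_eq_sub_of_modEq {N : ℤ} {f : ℤ → ℤ} (hper : ∀ i, f (i + N) = f i + N) {x y : ℤ}
    (h : x ≡ y [ZMOD N]) : f x - x = f y - y := by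
  have hg : Function.Periodic (fun i => f i - i) N := fun i => by simp only [hper]; ring
  obtain ⟨k, hk⟩ := h.dvd
  have hy : y = x + k * N := by linarith
  rw [hy]
  exact (hg.int_mul k x).symm

section RhoSymmetric

variable {n : ℕ} {f : ℤ → ℤ}

theorem sub_eq_two_mul_sub_of_modEq (hper : ∀ i, f (i + 2 * (n : ℤ)) = f i + 2 * (n : ℤ))
    (hsym : ∀ i, f (f i - n) = i + n) {x y : ℤ} (h : y ≡ f x + n [ZMOD 2 * n]) :
    f y - y = 2 * n - (f x - x) := by
  have hshift : f x + n ≡ f x - n [ZMOD 2 * n] := Int.modEq_iff_dvd.mpr ⟨-1, by ring⟩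
  rw [sub_eq_sub_of_modEq hper (h.trans hshift), hsym]
  ring

theorem mirror_eq (p : ℤ × ℤ) :
    mirror n f p = (reprMod (2 * n) (f p.2 + n), f p.1 + reprMod (2 * n) (f p.2 + n) - f p.2) := by
  simp only [mirror, reprMod, Prod.mk.injEq, true_and]
  ring

theorem alignSet_finite (hbound : ∀ i, i ≤ f i ∧ f i ≤ i + 2 * (n : ℤ)) :
    (alignSet n f).Finite := by
  refine ((Set.finite_Icc 1 (2 * (n : ℤ))).prod (Set.finite_Icc 1 (4 * (n : ℤ)))).subset ?_
  rintro ⟨i, j⟩ ⟨hi1, hi2, hij, hj, hji⟩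
  have := (hbound i).2
  exact ⟨⟨hi1, hi2⟩, by dsimp only at *; omega, by dsimp only at *; omega⟩

theorem modEq_apply_add_of_modEq (hper : ∀ i, f (i + 2 * (n : ℤ)) = f i + 2 * (n : ℤ))
    (hsym : ∀ i, f (f i - n) = i + n) {x y : ℤ} (h : y ≡ f x + n [ZMOD 2 * n]) :
    x ≡ f y + n [ZMOD 2 * n] := by
  have hfy := sub_eq_two_mul_sub_of_modEq hper hsym h
  obtain ⟨k, hk⟩ := h.dvd
  exact Int.modEq_iff_dvd.mpr ⟨2 - k, by linarith⟩

theorem mirror_fst_modEq (p : ℤ × ℤ) : (mirror n f p).1 ≡ f p.2 + n [ZMOD 2 * n] := by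
  rw [mirror_eq]
  exact reprMod_modEq _ _

theorem mirror_snd_eq (p : ℤ × ℤ) : (mirror n f p).2 = f p.1 + (mirror n f p).1 - f p.2 := by
  rw [mirror_eq]

theorem mirror_snd_modEq (p : ℤ × ℤ) : (mirror n f p).2 ≡ f p.1 + n [ZMOD 2 * n] := by
  have h := ((mirror_fst_modEq (n := n) (f := f) p).add_left (f p.1)).sub_right (f p.2)
  rw [mirror_snd_eq]
  convert h using 1
  ring

theorem mirror_fst_mem_Icc {p : ℤ × ℤ} (hp : p ∈ alignSet n f) :
    (mirror n f p).1 ∈ Set.Icc 1 (2 * (n : ℤ)) := by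
  obtain ⟨h1, h2, -⟩ := hp
  rw [mirror_eq]
  exact reprMod_mem_Icc (by omega) _

theorem mirror_mem_alignSet (hper : ∀ i, f (i + 2 * (n : ℤ)) = f i + 2 * (n : ℤ))
    (hbound : ∀ i, i ≤ f i ∧ f i ≤ i + 2 * (n : ℤ)) (hsym : ∀ i, f (f i - n) = i + n)
    {p : ℤ × ℤ} (hp : p ∈ alignSet n f) : mirror n f p ∈ alignSet n f := by
  obtain ⟨ha1, ha2⟩ := mirror_fst_mem_Icc hp
  obtain ⟨-, -, hij, -, hji⟩ := hp
  have hfa := sub_eq_two_mul_sub_of_modEq hper hsym (mirror_fst_modEq (f := f) p)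
  have hfb := sub_eq_two_mul_sub_of_modEq hper hsym (mirror_snd_modEq (f := f) p)
  have hb := mirror_snd_eq (n := n) (f := f) p
  have hfi := (hbound p.1).2
  exact ⟨ha1, ha2, by linarith, by linarith, by linarith⟩

theorem mirror_mirror (hper : ∀ i, f (i + 2 * (n : ℤ)) = f i + 2 * (n : ℤ))
    (hsym : ∀ i, f (f i - n) = i + n) {p : ℤ × ℤ} (hp : p ∈ alignSet n f) :
    mirror n f (mirror n f p) = p := by
  set q := mirror n f p
  have hq1 : (mirror n f q).1 = p.1 := by
    rw [mirror_eq]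
    exact reprMod_eq_of_modEq ⟨hp.1, hp.2.1⟩
      (modEq_apply_add_of_modEq hper hsym (mirror_snd_modEq p))
  have hfq1 := sub_eq_two_mul_sub_of_modEq hper hsym (mirror_fst_modEq (f := f) p)
  have hfq2 := sub_eq_two_mul_sub_of_modEq hper hsym (mirror_snd_modEq (f := f) p)
  have hq2 := mirror_snd_eq (n := n) (f := f) p
  have hqq2 := mirror_snd_eq (n := n) (f := f) q
  refine Prod.ext hq1 ?_
  rw [hqq2, hq1]
  linarith


theorem setOf_mirror_eq_self (hper : ∀ i, f (i + 2 * (n : ℤ)) = f i + 2 * (n : ℤ))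
    (hbound : ∀ i, i ≤ f i ∧ f i ≤ i + 2 * (n : ℤ)) (hsym : ∀ i, f (f i - n) = i + n) :
    {p ∈ alignSet n f | mirror n f p = p} =
      (fun i => (i, f i - n)) '' ↑{i ∈ Icc 1 (2 * (n : ℤ)) | i + n < f i} := by
  ext p
  constructor
  · rintro ⟨hp, hfix⟩
    have hfa := sub_eq_two_mul_sub_of_modEq hper hsym (mirror_fst_modEq (f := f) p)
    have hb := mirror_snd_eq (n := n) (f := f) p
    rw [hfix] at hfa hb
    obtain ⟨h1, h2, hij, -⟩ := hp
    refine ⟨p.1, ?_, Prod.ext rfl (by simp only; linarith)⟩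
    simp only [coe_filter, mem_Icc]
    exact ⟨⟨h1, h2⟩, by linarith⟩
  · rintro ⟨i, hi, rfl⟩
    simp only [coe_filter, mem_Icc] at hi
    obtain ⟨⟨h1, h2⟩, hlt⟩ := hi
    have hfi := (hbound i).2
    have hp : (i, f i - n) ∈ alignSet n f := by
      refine ⟨h1, h2, ?_, ?_, ?_⟩ <;> simp only [hsym] <;> linarith
    have hfst : (mirror n f (i, f i - n)).1 = i := by
      rw [mirror_eq]
      exact reprMod_eq_of_modEq ⟨h1, h2⟩ (Int.modEq_iff_dvd.mpr ⟨1, by simp only [hsym]; ring⟩)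
    refine ⟨hp, Prod.ext hfst ?_⟩
    rw [mirror_snd_eq, hfst]
    simp only [hsym]
    ring

theorem two_mul_sigmaL (hper : ∀ i, f (i + 2 * (n : ℤ)) = f i + 2 * (n : ℤ))
    (hbound : ∀ i, i ≤ f i ∧ f i ≤ i + 2 * (n : ℤ)) (hsym : ∀ i, f (f i - n) = i + n) :
    2 * sigmaL n f = lenBAP n f + #{i ∈ Icc 1 (2 * (n : ℤ)) | i + n < f i} := by
  have heven := (alignSet_finite hbound).even_ncard_add_ncard_fixed
    (fun _ hp => mirror_mem_alignSet hper hbound hsym hp) (fun _ hp => mirror_mirror hper hsym hp)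
  rw [sigmaL, Nat.two_mul_div_two_of_even heven, setOf_mirror_eq_self hper hbound hsym,
    Set.ncard_image_of_injective _ (Function.LeftInverse.injective (g := Prod.fst) fun _ => rfl),
    Set.ncard_coe_finset, lenBAP]

theorem card_filter_lt_eq_card_filter_gt (hper : ∀ i, f (i + 2 * (n : ℤ)) = f i + 2 * (n : ℤ))
    (hsym : ∀ i, f (f i - n) = i + n) :
    #{i ∈ Icc 1 (2 * (n : ℤ)) | i + n < f i} = #{i ∈ Icc 1 (2 * (n : ℤ)) | f i < i + n} := by
  set ρ := fun i => reprMod (2 * n) (f i + n)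
  have hρ : ∀ i, ρ i ≡ f i + n [ZMOD 2 * n] := fun i => reprMod_modEq _ _
  have hρ_mem : ∀ i ∈ Icc 1 (2 * (n : ℤ)), ρ i ∈ Icc 1 (2 * (n : ℤ)) := fun i hi => by
    rw [mem_Icc] at hi ⊢
    exact reprMod_mem_Icc (by omega) _
  have hρρ : ∀ i ∈ Icc 1 (2 * (n : ℤ)), ρ (ρ i) = i := fun i hi =>
    reprMod_eq_of_modEq (by simpa using hi) (modEq_apply_add_of_modEq hper hsym (hρ i))
  have hfρ : ∀ i, f (ρ i) - ρ i = 2 * n - (f i - i) := fun i =>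
    sub_eq_two_mul_sub_of_modEq hper hsym (hρ i)
  refine card_nbij' ρ ρ ?_ ?_ (fun i hi => hρρ i (mem_filter.mp hi).1)
    (fun i hi => hρρ i (mem_filter.mp hi).1) <;>
  · intro i hi
    obtain ⟨hi, hlt⟩ := mem_filter.mp hi
    have := hfρ i
    exact mem_filter.mpr ⟨hρ_mem i hi, by linarith⟩

end RhoSymmetric

theorem stmt7_general (n : ℕ) (f : ℤ → ℤ)
    (hper : ∀ i : ℤ, f (i + 2 * (n : ℤ)) = f i + 2 * (n : ℤ))
    (hbound : ∀ i : ℤ, i ≤ f i ∧ f i ≤ i + 2 * (n : ℤ))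
    (hsym : ∀ i : ℤ, f (f i - (n : ℤ)) = i + (n : ℤ))
    (m : ℕ)
    (hm : m = ((Finset.Icc (1 : ℤ) (2 * (n : ℤ))).filter
      (fun i => f i = i + (n : ℤ))).card) :
    2 * (sigmaL n f : ℤ) = (lenBAP n f : ℤ) + (n : ℤ) - (m : ℤ) / 2 ∧
    (n : ℤ) ^ 2 - (lenBAP n f : ℤ) =
      2 * (((n : ℤ) * ((n : ℤ) + 1)) / 2 - (sigmaL n f : ℤ)) - (m : ℤ) / 2 := by
  set S := #{i ∈ Icc 1 (2 * (n : ℤ)) | i + n < f i}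
  have hσ : 2 * (sigmaL n f : ℤ) = lenBAP n f + S := mod_cast two_mul_sigmaL hper hbound hsym
  have hST := card_filter_lt_eq_card_filter_gt hper hsym
  have hpart := card_filter_lt_add_card_filter_eq_add_card_filter_gt_s7
    (Icc 1 (2 * (n : ℤ))) f (fun i => i + (n : ℤ))
  have hcard : #(Icc 1 (2 * (n : ℤ))) = 2 * n := by simp only [Int.card_Icc]; omega
  have hhalf : (m : ℤ) / 2 = n - S := by omega
  obtain ⟨c, hc⟩ := Int.even_mul_succ_self (n : ℤ)
  have hc2 : (n : ℤ) * (n + 1) / 2 = c := by omega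
  rw [hhalf, hc2]
  exact ⟨by linarith, by linear_combination hc + hσ⟩

/-- For ρ-symmetric bounded affine `f` of type `(n,2n)` with `m = #{i : f i = i+n}`:
`2σℓ(f) = ℓ(f) + n − m/2`; equivalently `d(f) = 2σdim(f) − m/2` where
`d(f) = n² − ℓ(f)` and `σdim(f) = n(n+1)/2 − σℓ(f)`. -/
theorem stmt7 (n : ℕ) (f : ℤ → ℤ)
    (hbij : Function.Bijective f)
    (hper : ∀ i : ℤ, f (i + 2 * (n : ℤ)) = f i + 2 * (n : ℤ))
    (hbound : ∀ i : ℤ, i ≤ f i ∧ f i ≤ i + 2 * (n : ℤ))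
    (hsum : ∑ i ∈ Finset.Icc (1 : ℤ) (2 * (n : ℤ)), (f i - i) = 2 * (n : ℤ) ^ 2)
    (hsym : ∀ i : ℤ, f (f i - (n : ℤ)) = i + (n : ℤ))
    (m : ℕ)
    (hm : m = ((Finset.Icc (1 : ℤ) (2 * (n : ℤ))).filter
      (fun i => f i = i + (n : ℤ))).card) :
    2 * (sigmaL n f : ℤ) = (lenBAP n f : ℤ) + (n : ℤ) - (m : ℤ) / 2 ∧
    (n : ℤ) ^ 2 - (lenBAP n f : ℤ) =
      2 * (((n : ℤ) * ((n : ℤ) + 1)) / 2 - (sigmaL n f : ℤ)) - (m : ℤ) / 2 :=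
  stmt7_general n f hper hbound hsym m hm
end

section
/- Let f be a ρ-symmetric bounded affine permutation of type (n,2n) and i ∈ ℤ. Then f⋊s_i satisfies j ≤ (f⋊s_i)(j) ≤ j+2n for all j ∈ ℤ (equivalently, f⋊s_i is again a bounded affine permutation of type (n,2n)) if and only if f(i) ≠ i and f(i+1) ≠ i+1+2n. -/
/-- The affine simple reflection `s_i` of period `2n`: `j ↦ j+1` if `j ≡ i (mod 2n)`,
`j ↦ j−1` if `j ≡ i+1 (mod 2n)`, and `j ↦ j` otherwise. -/
def sRefl (n : ℕ) (i : ℤ) : ℤ → ℤ := fun j =>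
  if (j - i) % (2 * (n : ℤ)) = 0 then j + 1
  else if (j - (i + 1)) % (2 * (n : ℤ)) = 0 then j - 1
  else j

open Classical in
/-- The semidirect product `f ⋊ s_i`: equal to `s_{i+n} ∘ f ∘ s_i` if
`s_{i+n} ∘ f ≠ f ∘ s_i`, and to `f ∘ s_i` otherwise. -/
noncomputable def semidirect (n : ℕ) (i : ℤ) (f : ℤ → ℤ) : ℤ → ℤ :=
  if sRefl n (i + (n : ℤ)) ∘ f = f ∘ sRefl n i then f ∘ sRefl n i
  else sRefl n (i + (n : ℤ)) ∘ f ∘ sRefl n i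

/-!
Write `g j - j` for the displacement of `g`; for maps commuting with translation by `2n` it is
`2n`-periodic. Composing a bounded `g` with `s_m` on the right keeps it bounded iff `g m ≠ m` and
`g (m+1) ≠ m+1+2n`, on the left iff `g m ≠ m+2n` and `g (m+1) ≠ m+1`: a bad value can only occur on
one residue class, where the displacement is that of `m` or `m+1`. The first criterion settles the
branch `f ⋊ s_i = f ∘ s_i`. In the other branch `n > 0`, and ρ-symmetry `f (f j - n) = j + n` turns
the left criterion for `s_{i+n} ∘ (f ∘ s_i)` into the right one for `f ∘ s_i`.
-/

def IsBoundedAffine (n : ℕ) (g : ℤ → ℤ) : Prop :=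
  ∀ j : ℤ, j ≤ g j ∧ g j ≤ j + 2 * (n : ℤ)

section SimpleReflection

variable {n : ℕ} {m j : ℤ}

theorem two_mul_not_dvd_self (hn : 0 < n) : ¬ (2 * (n : ℤ)) ∣ n := fun h => by
  have := Int.le_of_dvd (by positivity) h
  omega

theorem sRefl_eq_ite (n : ℕ) (m j : ℤ) :
    sRefl n m j =
      if (2 * (n : ℤ)) ∣ j - m then j + 1 else if (2 * (n : ℤ)) ∣ j - (m + 1) then j - 1 else j := by
  simp only [sRefl, Int.dvd_iff_emod_eq_zero]

theorem sRefl_of_dvd (h : (2 * (n : ℤ)) ∣ j - m) : sRefl n m j = j + 1 := by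
  rw [sRefl_eq_ite, if_pos h]

theorem sRefl_of_dvd_sub_add_one (h₀ : ¬ (2 * (n : ℤ)) ∣ j - m) (h₁ : (2 * (n : ℤ)) ∣ j - (m + 1)) :
    sRefl n m j = j - 1 := by
  rw [sRefl_eq_ite, if_neg h₀, if_pos h₁]

theorem sRefl_of_not_dvd (h₀ : ¬ (2 * (n : ℤ)) ∣ j - m) (h₁ : ¬ (2 * (n : ℤ)) ∣ j - (m + 1)) :
    sRefl n m j = j := by
  rw [sRefl_eq_ite, if_neg h₀, if_neg h₁]

theorem sRefl_self (n : ℕ) (m : ℤ) : sRefl n m m = m + 1 :=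
  sRefl_of_dvd (by simp)

theorem sRefl_add_one (n : ℕ) (m : ℤ) : sRefl n m (m + 1) = m := by
  have h₀ : ¬ (2 * (n : ℤ)) ∣ m + 1 - m := fun h => by
    have := Int.eq_one_of_dvd_one (a := 2 * (n : ℤ)) (by positivity) (by simpa using h)
    omega
  rw [sRefl_of_dvd_sub_add_one h₀ (by simp), add_sub_cancel_right]

theorem sRefl_le_self (h : ¬ (2 * (n : ℤ)) ∣ j - m) : sRefl n m j ≤ j := by
  rw [sRefl_eq_ite, if_neg h]
  split_ifs <;> omega

theorem le_sRefl_self (h : ¬ (2 * (n : ℤ)) ∣ j - (m + 1)) : j ≤ sRefl n m j := by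
  rw [sRefl_eq_ite]
  split_ifs <;> omega

theorem sRefl_add_two_mul (n : ℕ) (m j : ℤ) :
    sRefl n m (j + 2 * (n : ℤ)) = sRefl n m j + 2 * (n : ℤ) := by
  have hdvd : ∀ a, (2 * (n : ℤ)) ∣ j + 2 * (n : ℤ) - a ↔ (2 * (n : ℤ)) ∣ j - a := fun a => by
    rw [show j + 2 * (n : ℤ) - a = j - a + 2 * (n : ℤ) by ring, dvd_add_self_right]
  simp only [sRefl_eq_ite, hdvd]
  split_ifs <;> omega

end SimpleReflection

section Affine

variable {n : ℕ} {g : ℤ → ℤ}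

theorem sub_self_eq_of_dvd (hper : ∀ j : ℤ, g (j + 2 * (n : ℤ)) = g j + 2 * (n : ℤ)) {a b : ℤ}
    (h : (2 * (n : ℤ)) ∣ a - b) : g a - a = g b - b := by
  have hp : Function.Periodic (fun j => g j - j) (2 * (n : ℤ)) := fun j => by
    dsimp only
    rw [hper]
    ring
  obtain ⟨k, hk⟩ := h
  simpa [show a = b + k * (2 * (n : ℤ)) by linarith] using hp.int_mul k b

theorem comp_sRefl_add_two_mul (hper : ∀ j : ℤ, g (j + 2 * (n : ℤ)) = g j + 2 * (n : ℤ)) (m j : ℤ) :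
    (g ∘ sRefl n m) (j + 2 * (n : ℤ)) = (g ∘ sRefl n m) j + 2 * (n : ℤ) := by
  simp only [Function.comp_apply, sRefl_add_two_mul, hper]

theorem isBoundedAffine_comp_sRefl_iff (hper : ∀ j : ℤ, g (j + 2 * (n : ℤ)) = g j + 2 * (n : ℤ))
    (hg : IsBoundedAffine n g) (m : ℤ) :
    IsBoundedAffine n (g ∘ sRefl n m) ↔ g m ≠ m ∧ g (m + 1) ≠ m + 1 + 2 * (n : ℤ) := by
  constructor
  · intro h
    have h₁ := (h (m + 1)).1
    have h₀ := (h m).2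
    simp only [Function.comp_apply, sRefl_add_one, sRefl_self] at h₀ h₁
    omega
  · rintro ⟨hm, hm₁⟩ j
    simp only [Function.comp_apply]
    by_cases h₀ : (2 * (n : ℤ)) ∣ j - m
    · have hd := sub_self_eq_of_dvd hper (a := j + 1) (b := m + 1) (by simpa using h₀)
      rw [sRefl_of_dvd h₀]
      have := hg (m + 1)
      omega
    by_cases h₁ : (2 * (n : ℤ)) ∣ j - (m + 1)
    · have hd := sub_self_eq_of_dvd hper (a := j - 1) (b := m) (by rwa [sub_right_comm, sub_sub])
      rw [sRefl_of_dvd_sub_add_one h₀ h₁]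
      have := hg m
      omega
    · rw [sRefl_of_not_dvd h₀ h₁]
      exact hg j

theorem isBoundedAffine_sRefl_comp_iff (hper : ∀ j : ℤ, g (j + 2 * (n : ℤ)) = g j + 2 * (n : ℤ))
    (hg : IsBoundedAffine n g) (m : ℤ) :
    IsBoundedAffine n (sRefl n m ∘ g) ↔ g m ≠ m + 2 * (n : ℤ) ∧ g (m + 1) ≠ m + 1 := by
  constructor
  · intro h
    refine ⟨fun hm => ?_, fun hm₁ => ?_⟩
    · have := (h m).2
      simp only [Function.comp_apply, hm, sRefl_of_dvd (show (2 * (n : ℤ)) ∣ m + 2 * n - m by simp)]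
        at this
      omega
    · have := (h (m + 1)).1
      simp only [Function.comp_apply, hm₁, sRefl_add_one] at this
      omega
  · rintro ⟨hm, hm₁⟩ j
    simp only [Function.comp_apply]
    have := hg j
    by_cases h₀ : (2 * (n : ℤ)) ∣ g j - m
    · rw [sRefl_of_dvd h₀]
      have : g j ≠ j + 2 * n := fun he => hm <| by
        have := sub_self_eq_of_dvd hper (a := j) (b := m) (by
          rw [show j - m = g j - m - 2 * (n : ℤ) by omega]
          exact dvd_sub h₀ dvd_rfl)
        omega
      omega
    by_cases h₁ : (2 * (n : ℤ)) ∣ g j - (m + 1)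
    · rw [sRefl_of_dvd_sub_add_one h₀ h₁]
      have : g j ≠ j := fun he => hm₁ <| by
        have := sub_self_eq_of_dvd hper (a := j) (b := m + 1) (by rwa [he] at h₁)
        omega
      omega
    · rw [sRefl_of_not_dvd h₀ h₁]
      exact this

variable {f : ℤ → ℤ} {i : ℤ}

theorem pos_of_sRefl_comp_ne_comp_sRefl (hf : IsBoundedAffine n f)
    (h : sRefl n (i + n) ∘ f ≠ f ∘ sRefl n i) : 0 < n := by
  refine Nat.pos_of_ne_zero fun hn => h ?_
  subst hn
  have hid : f = id := funext fun j => by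
    have := hf j
    push_cast at this
    exact (le_antisymm (by omega) this.1 : f j = j)
  simp [hid]

theorem apply_ne_of_isBoundedAffine_sRefl_comp_comp_sRefl (hn : 0 < n)
    (h : IsBoundedAffine n (sRefl n (i + n) ∘ f ∘ sRefl n i)) :
    f i ≠ i ∧ f (i + 1) ≠ i + 1 + 2 * (n : ℤ) := by
  refine ⟨fun hi => ?_, fun hi => ?_⟩
  · have hle : sRefl n (i + n) i ≤ i :=
      sRefl_le_self (by simpa using two_mul_not_dvd_self hn)
    have := (h (i + 1)).1
    simp only [Function.comp_apply, sRefl_add_one, hi] at this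
    omega
  · have hle : i + 1 + 2 * (n : ℤ) ≤ sRefl n (i + n) (i + 1 + 2 * n) := le_sRefl_self <| by
      rw [show i + 1 + 2 * (n : ℤ) - (i + n + 1) = n by omega]
      exact two_mul_not_dvd_self hn
    have := (h i).2
    simp only [Function.comp_apply, sRefl_self, hi] at this
    omega

end Affine

section RhoSymmetric

variable {n : ℕ} {f : ℤ → ℤ} {i : ℤ}

theorem comp_sRefl_apply_add_ne (hper : ∀ j : ℤ, f (j + 2 * (n : ℤ)) = f j + 2 * (n : ℤ))
    (hf : IsBoundedAffine n f) (hsym : ∀ j : ℤ, f (f j - n) = j + n) (hn : 0 < n) (hi : f i ≠ i) :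
    (f ∘ sRefl n i) (i + n) ≠ i + n + 2 * (n : ℤ) := by
  intro h
  have hle : sRefl n i (i + n) ≤ i + n :=
    sRefl_le_self (by simpa using two_mul_not_dvd_self hn)
  -- ρ-symmetry at `x = s_i (i+n)` reads `f i = x - n`, while `x ≤ i + n`.
  have hx := hsym (sRefl n i (i + n))
  rw [Function.comp_apply] at h
  rw [h, show i + n + 2 * (n : ℤ) - n = i + 2 * n by ring, hper] at hx
  have := hf i
  omega

theorem comp_sRefl_apply_add_add_one_ne (hf : IsBoundedAffine n f)
    (hsym : ∀ j : ℤ, f (f j - n) = j + n) (hn : 0 < n) (hi : f (i + 1) ≠ i + 1 + 2 * (n : ℤ)) :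
    (f ∘ sRefl n i) (i + n + 1) ≠ i + n + 1 := by
  intro h
  have hle : i + n + 1 ≤ sRefl n i (i + n + 1) := le_sRefl_self <| by
    rw [show i + n + 1 - (i + 1) = (n : ℤ) by omega]
    exact two_mul_not_dvd_self hn
  -- ρ-symmetry at `x = s_i (i+n+1)` reads `f (i+1) = x + n`, while `x ≥ i + n + 1`.
  have hx := hsym (sRefl n i (i + n + 1))
  rw [Function.comp_apply] at h
  rw [h, show i + n + 1 - (n : ℤ) = i + 1 by omega] at hx
  have := hf (i + 1)
  omega

end RhoSymmetric

theorem stmt8_general (n : ℕ) (f : ℤ → ℤ)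
    (hper : ∀ j : ℤ, f (j + 2 * (n : ℤ)) = f j + 2 * (n : ℤ))
    (hbound : ∀ j : ℤ, j ≤ f j ∧ f j ≤ j + 2 * (n : ℤ))
    (hsym : ∀ j : ℤ, f (f j - (n : ℤ)) = j + (n : ℤ))
    (i : ℤ) :
    (∀ j : ℤ, j ≤ semidirect n i f j ∧ semidirect n i f j ≤ j + 2 * (n : ℤ)) ↔
      (f i ≠ i ∧ f (i + 1) ≠ i + 1 + 2 * (n : ℤ)) := by
  change IsBoundedAffine n (semidirect n i f) ↔ _
  unfold semidirect
  split_ifs with hcomm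
  · exact isBoundedAffine_comp_sRefl_iff hper hbound i
  have hn := pos_of_sRefl_comp_ne_comp_sRefl hbound hcomm
  refine ⟨apply_ne_of_isBoundedAffine_sRefl_comp_comp_sRefl hn, fun ⟨hi, hi₁⟩ => ?_⟩
  have hg := (isBoundedAffine_comp_sRefl_iff hper hbound i).2 ⟨hi, hi₁⟩
  exact (isBoundedAffine_sRefl_comp_iff (comp_sRefl_add_two_mul hper i) hg (i + n)).2
    ⟨comp_sRefl_apply_add_ne hper hbound hsym hn hi,
      comp_sRefl_apply_add_add_one_ne hbound hsym hn hi₁⟩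

/-- For a ρ-symmetric bounded affine permutation `f` of type `(n,2n)`:
`f ⋊ s_i` is again bounded (i.e. `j ≤ (f⋊s_i)(j) ≤ j + 2n` for all `j`)
iff `f i ≠ i` and `f (i+1) ≠ i+1+2n`. -/
theorem stmt8 (n : ℕ) (f : ℤ → ℤ)
    (hbij : Function.Bijective f)
    (hper : ∀ j : ℤ, f (j + 2 * (n : ℤ)) = f j + 2 * (n : ℤ))
    (hbound : ∀ j : ℤ, j ≤ f j ∧ f j ≤ j + 2 * (n : ℤ))
    (hsum : ∑ j ∈ Finset.Icc (1 : ℤ) (2 * (n : ℤ)), (f j - j) = 2 * (n : ℤ) ^ 2)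
    (hsym : ∀ j : ℤ, f (f j - (n : ℤ)) = j + (n : ℤ))
    (i : ℤ) :
    (∀ j : ℤ, j ≤ semidirect n i f j ∧ semidirect n i f j ≤ j + 2 * (n : ℤ)) ↔
      (f i ≠ i ∧ f (i + 1) ≠ i + 1 + 2 * (n : ℤ)) :=
  stmt8_general n f hper hbound hsym i
end

section
/- For every a ∈ ℝ and every i ∈ {1,…,2n}, one has (x_i(a)·y_{i+n}(a)) · R · (x_i(a)·y_{i+n}(a))ᵀ = R, where the index i+n is taken modulo 2n with representative in {1,…,2n}. -/
open Matrix

/-- `x_i(a)` (0-based index `i`): the identity matrix with an extra entry `a` in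
position `(i, i+1)` for `i < 2n−1`, and with extra entry `(−1)^{n−1}a` in position
`(2n−1, 0)` for `i = 2n−1`. -/
def xMat (n : ℕ) (i : Fin (2*n)) (a : ℝ) : Matrix (Fin (2*n)) (Fin (2*n)) ℝ :=
  fun r c =>
    (if r = c then 1 else 0) +
    (if (i : ℕ) + 1 < 2*n then
      (if (r : ℕ) = (i : ℕ) ∧ (c : ℕ) = (i : ℕ) + 1 then a else 0)
    else
      (if (r : ℕ) = (i : ℕ) ∧ (c : ℕ) = 0 then (-1 : ℝ) ^ (n - 1) * a else 0))

/-- `y_i(a)` (0-based index `i`): the identity matrix with an extra entry `a` in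
position `(i+1, i)` for `i < 2n−1`, and with extra entry `(−1)^{n−1}a` in position
`(0, 2n−1)` for `i = 2n−1`. -/
def yMat (n : ℕ) (i : Fin (2*n)) (a : ℝ) : Matrix (Fin (2*n)) (Fin (2*n)) ℝ :=
  fun r c =>
    (if r = c then 1 else 0) +
    (if (i : ℕ) + 1 < 2*n then
      (if (r : ℕ) = (i : ℕ) + 1 ∧ (c : ℕ) = (i : ℕ) then a else 0)
    else
      (if (r : ℕ) = 0 ∧ (c : ℕ) = (i : ℕ) then (-1 : ℝ) ^ (n - 1) * a else 0))

/-! Write `x_i(a) = 1 + U` and `y_{i+n}(a) = 1 + V` with single-entry matrices `U`, `V`. Then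
`UV = 0`, so the product is `1 + B` with `B = U + V` and `B² = 0`. As `R` is antisymmetric,
`R Bᵀ = -(B R)ᵀ`, so once `B R` is symmetric the product sends `R` to `(1 + B)(1 - B) R = R`.
Symmetry of `B R` is the sign identity `ε_i ρ_{i+1} = ε_{i+n} ρ_{i+n}`, where `ε = wrapSign` is
the extra sign `(-1)^{n-1}` carried by the wrap-around generators and
`ρ_q = formSign n q = R_{q,q+n}` (indices `0`-based and taken mod `2n`). -/

section

variable {m α : Type*} [Fintype m] [DecidableEq m] [CommRing α]

theorem one_add_mul_mul_transpose_one_add {R B : Matrix m m α} (hR : Rᵀ = -R)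
    (hBR : (B * R)ᵀ = B * R) (hB : B * B = 0) : (1 + B) * R * (1 + B)ᵀ = R := by
  have hRB : R * Bᵀ = -(B * R) := by
    rw [← hBR, transpose_mul, hR, Matrix.neg_mul, neg_neg]
  calc (1 + B) * R * (1 + B)ᵀ = R - B * B * R := by
        rw [transpose_add, transpose_one, Matrix.mul_assoc, Matrix.mul_add, Matrix.mul_one, hRB]
        noncomm_ring
    _ = R := by rw [hB, Matrix.zero_mul, sub_zero]

end

section

open Fin.NatCast

namespace Fin

variable {n : ℕ} [NeZero n]

theorem val_add_one_two_mul (i : Fin (2 * n)) :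
    ((i + 1 : Fin (2 * n)) : ℕ) = if (i : ℕ) + 1 < 2 * n then (i : ℕ) + 1 else 0 := by
  have := i.isLt
  rw [Fin.val_add, Fin.val_one']
  split_ifs with h
  · rw [Nat.one_mod_eq_one.mpr (by omega), Nat.mod_eq_of_lt h]
  · rw [Nat.one_mod_eq_one.mpr (by omega), show (i : ℕ) + 1 = 2 * n by omega, Nat.mod_self]

theorem val_natCast_two_mul : ((n : Fin (2 * n)) : ℕ) = n := by
  rw [Fin.val_natCast, Nat.mod_eq_of_lt (by have := NeZero.pos n; omega)]

theorem val_add_natCast_two_mul (i : Fin (2 * n)) :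
    ((i + n : Fin (2 * n)) : ℕ) = if (i : ℕ) < n then (i : ℕ) + n else (i : ℕ) - n := by
  have := i.isLt
  rw [Fin.val_add, val_natCast_two_mul]
  split_ifs with h
  · exact Nat.mod_eq_of_lt (by omega)
  · rw [Nat.mod_eq_sub_mod (by omega), Nat.mod_eq_of_lt (by omega)]; omega

theorem add_natCast_add_natCast_two_mul (i : Fin (2 * n)) : i + n + n = i := by
  rw [add_assoc, ← Nat.cast_add, ← two_mul, Fin.natCast_self, add_zero]

theorem self_ne_add_natCast_two_mul (i : Fin (2 * n)) : i ≠ i + n := by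
  rw [Ne, eq_comm, add_eq_left, Fin.ext_iff, val_natCast_two_mul, Fin.val_zero]
  exact NeZero.ne n

theorem self_ne_add_one_two_mul (i : Fin (2 * n)) : i ≠ i + 1 := by
  rw [Ne, eq_comm, add_eq_left, Fin.ext_iff, Fin.val_one', Fin.val_zero,
    Nat.one_mod_eq_one.mpr (by have := NeZero.pos n; omega)]
  exact one_ne_zero

theorem add_one_ne_add_natCast_add_one_two_mul (i : Fin (2 * n)) : i + 1 ≠ i + n + 1 := by
  simpa using self_ne_add_natCast_two_mul i

end Fin

def wrapSign (n : ℕ) (i : Fin (2 * n)) : ℝ :=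
  if (i : ℕ) + 1 < 2 * n then 1 else (-1) ^ (n - 1)

def formSign (n : ℕ) (q : Fin (2 * n)) : ℝ :=
  if (q : ℕ) < n then (-1) ^ (q : ℕ) else -(-1) ^ ((q : ℕ) - n)

variable {n : ℕ} [NeZero n]

theorem xMat_eq_one_add_single (i : Fin (2 * n)) (a : ℝ) :
    xMat n i a = 1 + single i (i + 1) (wrapSign n i * a) := by
  ext r c
  simp only [xMat, Matrix.add_apply, one_apply, single_apply, wrapSign, Fin.ext_iff,
    Fin.val_add_one_two_mul]
  split_ifs <;> first | rfl | omega | ring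

theorem yMat_eq_one_add_single (i : Fin (2 * n)) (a : ℝ) :
    yMat n i a = 1 + single (i + 1) i (wrapSign n i * a) := by
  ext r c
  simp only [yMat, Matrix.add_apply, one_apply, single_apply, wrapSign, Fin.ext_iff,
    Fin.val_add_one_two_mul]
  split_ifs <;> first | rfl | omega | ring

theorem Rmat_apply (q s : Fin (2 * n)) :
    Rmat n q s = if s = q + n then formSign n q else 0 := by
  have := q.isLt
  have := s.isLt
  simp only [Rmat, formSign, Fin.ext_iff, Fin.val_add_natCast_two_mul]
  split_ifs <;> first | rfl | omega | congr 2

theorem rotIdx_eq_add (i : Fin (2 * n)) : rotIdx n i = i + n := by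
  ext
  rw [Fin.val_add, Fin.val_natCast_two_mul]
  rfl

theorem Rmat_transpose : (Rmat n)ᵀ = -Rmat n := by
  ext r c
  have := NeZero.pos n
  simp only [transpose_apply, Matrix.neg_apply, Rmat]
  split_ifs <;> first | omega | simp

theorem single_mul_Rmat (p q : Fin (2 * n)) (c : ℝ) :
    single p q c * Rmat n = single p (q + n) (c * formSign n q) := by
  ext r s
  by_cases hr : r = p
  · subst hr
    simp only [single_mul_apply_same, Rmat_apply, single_apply, true_and, eq_comm (a := q + n)]
    split_ifs <;> simp
  · simp [single_mul_apply_of_ne _ _ _ _ _ hr, Ne.symm hr]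

theorem wrapSign_mul_formSign_add_one (i : Fin (2 * n)) :
    wrapSign n i * formSign n (i + 1) = wrapSign n (i + n) * formSign n (i + n) := by
  have := i.isLt
  simp only [wrapSign, formSign, Fin.val_add_one_two_mul, Fin.val_add_natCast_two_mul]
  split_ifs <;> try omega
  · rw [Nat.add_sub_cancel, pow_succ]; ring
  · rw [show (i : ℕ) + 1 - n = 0 by omega, show (i : ℕ) + n - n = n - 1 by omega,
      mul_neg, mul_neg, ← mul_pow]
    norm_num
  · rw [show (i : ℕ) + 1 - n = (i : ℕ) - n + 1 by omega, pow_succ]; ring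
  · rw [show (i : ℕ) - n = n - 1 by omega]; ring

def xyNilpotentPart (n : ℕ) [NeZero n] (i : Fin (2 * n)) (a : ℝ) :
    Matrix (Fin (2 * n)) (Fin (2 * n)) ℝ :=
  single i (i + 1) (wrapSign n i * a) + single (i + n + 1) (i + n) (wrapSign n (i + n) * a)

theorem xMat_mul_yMat_rotIdx (i : Fin (2 * n)) (a : ℝ) :
    xMat n i a * yMat n (rotIdx n i) a = 1 + xyNilpotentPart n i a := by
  rw [xMat_eq_one_add_single, rotIdx_eq_add, yMat_eq_one_add_single, xyNilpotentPart]
  simp only [Matrix.add_mul, Matrix.mul_add, Matrix.one_mul, Matrix.mul_one,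
    single_mul_single_of_ne _ _ _ _ (Fin.add_one_ne_add_natCast_add_one_two_mul i), add_zero]
  abel

theorem xyNilpotentPart_mul_self (i : Fin (2 * n)) (a : ℝ) :
    xyNilpotentPart n i a * xyNilpotentPart n i a = 0 := by
  simp only [xyNilpotentPart, Matrix.add_mul, Matrix.mul_add,
    single_mul_single_of_ne _ _ _ _ (Fin.self_ne_add_one_two_mul i).symm,
    single_mul_single_of_ne _ _ _ _ (Fin.add_one_ne_add_natCast_add_one_two_mul i),
    single_mul_single_of_ne _ _ _ _ (Fin.self_ne_add_natCast_two_mul i).symm,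
    single_mul_single_of_ne _ _ _ _ (Fin.self_ne_add_one_two_mul (i + (n : Fin (2 * n)))),
    add_zero]

theorem transpose_xyNilpotentPart_mul_Rmat (i : Fin (2 * n)) (a : ℝ) :
    (xyNilpotentPart n i a * Rmat n)ᵀ = xyNilpotentPart n i a * Rmat n := by
  rw [xyNilpotentPart, Matrix.add_mul, single_mul_Rmat, single_mul_Rmat,
    Fin.add_natCast_add_natCast_two_mul, add_right_comm, transpose_add, transpose_single,
    transpose_single, mul_right_comm, wrapSign_mul_formSign_add_one, mul_right_comm, add_comm]

end

/-- For every `a ∈ ℝ` and index `i`, the matrix `x_i(a)·y_{i+n}(a)` preserves the form `R`. -/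
theorem stmt9 (n : ℕ) (a : ℝ) (i : Fin (2*n)) :
    (xMat n i a * yMat n (rotIdx n i) a) * Rmat n *
      (xMat n i a * yMat n (rotIdx n i) a)ᵀ = Rmat n := by
  have : NeZero n := ⟨by rintro rfl; exact i.elim0⟩
  rw [xMat_mul_yMat_rotIdx]
  exact one_add_mul_mul_transpose_one_add Rmat_transpose
    (transpose_xyNilpotentPart_mul_Rmat i a) (xyNilpotentPart_mul_self i a)
end

section
/- Let n ≥ 1 and define f : ℤ → ℤ on {1,…,2n} by f(1) = n+1, f(2) = n+2, and f(2s−1) = n+2s, f(2s) = n+2s−1 for 2 ≤ s ≤ n, extended to ℤ by f(i+2n) = f(i)+2n. Then f is a ρ-symmetric bounded affine permutation of type (n,2n); exactly two indices i ∈ {1,…,2n} satisfy f(i) = i+n; the alignments (i,j) of f with 1 ≤ i ≤ 2n are exactly the pairs (2s−1, 2s) for 2 ≤ s ≤ n, each of which is fixed by the mirror map; and consequently σℓ(f) = n−1. -/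
/-!
On `{1, …, 2n}` the permutation is `f r = r + n + shift r`, where `shift` is `0` on `1, 2`,
`+1` on the remaining odd and `-1` on the remaining even residues; since `f i - i` is
`2n`-periodic, everything reduces to this fundamental domain. The shifts cancel in pairs, which
gives the sum `2n²`, and ρ-symmetry comes from `f r - n = r + shift r` together with
`shift (r + shift r) = -shift r`. An alignment `i < j ≤ f j < f i` forces
`j + n - 1 ≤ f j < f i ≤ i + n + 1`, so `j = i + 1` with `shift i = 1`: these are the pairs
`(2s - 1, 2s)`, and each is its own mirror.
-/

open Finset

theorem Function.bijective_of_map_map_sub_eq_add {G : Type*} [AddCommGroup G] {f : G → G}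
    (m : G) (h : ∀ i, f (f i - m) = i + m) : Function.Bijective f :=
  ⟨fun a b hab => add_right_cancel (by rw [← h a, ← h b, hab]),
    fun j => ⟨f (j - m) - m, by simpa using h (j - m)⟩⟩

theorem Finset.sum_Icc_one_two_mul_eq_sum_range {M : Type*} [AddCommMonoid M] (g : ℤ → M)
    (m : ℕ) :
    ∑ i ∈ Icc (1 : ℤ) (2 * m), g i = ∑ k ∈ range m, (g (2 * k + 1) + g (2 * k + 2)) := by
  induction m with
  | zero => simp
  | succ m ih =>
    have hsplit : Icc (1 : ℤ) (2 * ↑(m + 1)) =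
        insert (2 * (m : ℤ) + 1 + 1) (insert (2 * (m : ℤ) + 1) (Icc 1 (2 * (m : ℤ)))) := by
      rw [insert_Icc_right_eq_Icc_add_one (by omega), insert_Icc_right_eq_Icc_add_one (by omega)]
      push_cast; ring_nf
    rw [hsplit, sum_insert (by simp), sum_insert (by simp), ih, sum_range_succ, add_comm,
      ← add_assoc, add_comm (g _)]
    ring_nf

section AddPeriodic

variable {f : ℤ → ℤ} {p : ℤ}

theorem map_add_mul_of_map_add (hper : ∀ i, f (i + p) = f i + p) (i k : ℤ) :
    f (i + k * p) = f i + k * p := by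
  have hg : Function.Periodic (fun i => f i - i) p := fun i => by simp only [hper]; ring
  have := hg.int_mul k i
  simp only [Int.cast_id] at this
  linarith

theorem exists_mem_Icc_eq_add_mul (hp : 0 < p) (i : ℤ) :
    ∃ r k, 1 ≤ r ∧ r ≤ p ∧ i = r + k * p :=
  ⟨(i - 1) % p + 1, (i - 1) / p, by linarith [Int.emod_nonneg (i - 1) hp.ne'],
    by linarith [Int.emod_lt_of_pos (i - 1) hp],
    by linarith [Int.emod_add_mul_ediv (i - 1) p, mul_comm p ((i - 1) / p)]⟩

theorem exists_mem_Icc_map_sub_eq (hper : ∀ i, f (i + p) = f i + p) (hp : 0 < p) (i : ℤ) :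
    ∃ r, 1 ≤ r ∧ r ≤ p ∧ f i - i = f r - r := by
  obtain ⟨r, k, hr1, hr2, rfl⟩ := exists_mem_Icc_eq_add_mul hp i
  exact ⟨r, hr1, hr2, by rw [map_add_mul_of_map_add hper]; ring⟩

theorem map_map_sub_eq_add_of_mem_Icc (hper : ∀ i, f (i + p) = f i + p) (hp : 0 < p) (m : ℤ)
    (h : ∀ r, 1 ≤ r → r ≤ p → f (f r - m) = r + m) (i : ℤ) : f (f i - m) = i + m := by
  obtain ⟨r, k, hr1, hr2, rfl⟩ := exists_mem_Icc_eq_add_mul hp i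
  rw [map_add_mul_of_map_add hper, show f r + k * p - m = f r - m + k * p by ring,
    map_add_mul_of_map_add hper, h r hr1 hr2]
  ring

end AddPeriodic

theorem sigmaL_eq_ncard_of_forall_mirror_eq_self {n : ℕ} {f : ℤ → ℤ}
    (h : ∀ p ∈ alignSet n f, mirror n f p = p) : sigmaL n f = (alignSet n f).ncard := by
  rw [sigmaL, Set.sep_eq_self_iff_mem_true.mpr h]
  omega

namespace PairSwap

def shift (r : ℤ) : ℤ := if r ≤ 2 then 0 else if r % 2 = 1 then 1 else -1

theorem shift_mem_Icc (r : ℤ) : -1 ≤ shift r ∧ shift r ≤ 1 := by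
  unfold shift; split_ifs <;> omega

theorem shift_add_shift (k : ℤ) (hk : 0 ≤ k) : shift (2 * k + 1) + shift (2 * k + 2) = 0 := by
  unfold shift; split_ifs <;> omega

theorem shift_two_mul_sub_one {s : ℤ} (hs : 2 ≤ s) : shift (2 * s - 1) = 1 := by
  unfold shift; split_ifs <;> omega

theorem shift_two_mul {s : ℤ} (hs : 2 ≤ s) : shift (2 * s) = -1 := by
  unfold shift; split_ifs <;> omega

theorem shift_add_shift_self (r : ℤ) : shift (r + shift r) = -shift r := by
  unfold shift; split_ifs <;> omega

theorem add_shift_mem_Icc {r m : ℤ} (hr1 : 1 ≤ r) (hr2 : r ≤ 2 * m) :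
    1 ≤ r + shift r ∧ r + shift r ≤ 2 * m := by
  unfold shift; split_ifs <;> omega

variable {n : ℕ} {f : ℤ → ℤ}

theorem eq_add_shift (hf1 : f 1 = (n : ℤ) + 1) (hf2 : f 2 = (n : ℤ) + 2)
    (hodd : ∀ s : ℤ, 2 ≤ s → s ≤ (n : ℤ) → f (2 * s - 1) = (n : ℤ) + 2 * s)
    (heven : ∀ s : ℤ, 2 ≤ s → s ≤ (n : ℤ) → f (2 * s) = (n : ℤ) + 2 * s - 1)
    (r : ℤ) (hr1 : 1 ≤ r) (hr2 : r ≤ 2 * n) : f r = r + n + shift r := by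
  unfold shift
  split_ifs with hsmall hodd_r
  · obtain rfl | rfl : r = 1 ∨ r = 2 := by omega
    · rw [hf1]; ring
    · rw [hf2]; ring
  · obtain ⟨s, rfl⟩ : ∃ s, r = 2 * s - 1 := ⟨(r + 1) / 2, by omega⟩
    rw [hodd s (by omega) (by omega)]; ring
  · obtain ⟨s, rfl⟩ : ∃ s, r = 2 * s := ⟨r / 2, by omega⟩
    rw [heven s (by omega) (by omega)]; ring

theorem map_sub_self_mem_Icc
    (hval : ∀ r, 1 ≤ r → r ≤ 2 * (n : ℤ) → f r = r + n + shift r)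
    (hper : ∀ i, f (i + 2 * n) = f i + 2 * n) (hn : 1 ≤ n) (i : ℤ) :
    (n : ℤ) - 1 ≤ f i - i ∧ f i - i ≤ n + 1 := by
  obtain ⟨r, hr1, hr2, hr⟩ := exists_mem_Icc_map_sub_eq hper (by omega) i
  have := shift_mem_Icc r
  rw [hr, hval r hr1 hr2]
  constructor <;> linarith

theorem map_map_sub_eq_add
    (hval : ∀ r, 1 ≤ r → r ≤ 2 * (n : ℤ) → f r = r + n + shift r)
    (hper : ∀ i, f (i + 2 * n) = f i + 2 * n) (hn : 1 ≤ n) (i : ℤ) :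
    f (f i - n) = i + n := by
  refine map_map_sub_eq_add_of_mem_Icc hper (by omega) _ (fun r hr1 hr2 => ?_) i
  obtain ⟨h1, h2⟩ := add_shift_mem_Icc hr1 hr2
  rw [hval r hr1 hr2, add_sub_right_comm, add_sub_cancel_right, hval _ h1 h2,
    shift_add_shift_self]
  ring

theorem sum_Icc_map_sub_self
    (hval : ∀ r, 1 ≤ r → r ≤ 2 * (n : ℤ) → f r = r + n + shift r) :
    ∑ i ∈ Icc (1 : ℤ) (2 * n), (f i - i) = 2 * (n : ℤ) ^ 2 := by
  have hpair : ∀ k ∈ range n, f (2 * k + 1) - (2 * k + 1) + (f (2 * k + 2) - (2 * k + 2)) =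
      2 * (n : ℤ) := fun k hk => by
    have hk : (k : ℤ) < n := by simpa using hk
    rw [hval _ (by omega) (by omega), hval _ (by omega) (by omega)]
    linarith [shift_add_shift k (by omega)]
  rw [sum_Icc_one_two_mul_eq_sum_range, sum_congr rfl hpair, sum_const, card_range, nsmul_eq_mul]
  ring

theorem filter_map_eq_add_eq
    (hval : ∀ r, 1 ≤ r → r ≤ 2 * (n : ℤ) → f r = r + n + shift r)
    (hn : 1 ≤ n) : (Icc (1 : ℤ) (2 * n)).filter (fun i => f i = i + n) = {1, 2} := by
  ext i
  simp only [mem_filter, mem_Icc, mem_insert, mem_singleton]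
  constructor
  · rintro ⟨⟨hi1, hi2⟩, hfi⟩
    rw [hval i hi1 hi2, shift] at hfi
    split_ifs at hfi <;> omega
  · rintro (rfl | rfl) <;> refine ⟨by omega, ?_⟩ <;> rw [hval _ (by omega) (by omega)] <;> rfl

theorem mem_alignSet_iff
    (hval : ∀ r, 1 ≤ r → r ≤ 2 * (n : ℤ) → f r = r + n + shift r)
    (hper : ∀ i, f (i + 2 * n) = f i + 2 * n) (hn : 1 ≤ n) (p : ℤ × ℤ) :
    p ∈ alignSet n f ↔ ∃ s : ℤ, 2 ≤ s ∧ s ≤ (n : ℤ) ∧ p = (2 * s - 1, 2 * s) := by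
  obtain ⟨i, j⟩ := p
  simp only [alignSet, Set.mem_ofPred_eq, Prod.mk.injEq]
  constructor
  · rintro ⟨hi1, hi2, hij, -, hfji⟩
    have hfj := (map_sub_self_mem_Icc hval hper hn j).1
    have hfi := hval i hi1 hi2
    rw [shift] at hfi
    split_ifs at hfi
    · omega
    · exact ⟨(i + 1) / 2, by omega, by omega, by omega, by omega⟩
    · omega
  · rintro ⟨s, hs1, hs2, rfl, rfl⟩
    have hodd := hval (2 * s - 1) (by omega) (by omega)
    have heven := hval (2 * s) (by omega) (by omega)
    rw [shift_two_mul_sub_one hs1] at hodd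
    rw [shift_two_mul hs1] at heven
    omega

theorem alignSet_eq_image
    (hval : ∀ r, 1 ≤ r → r ≤ 2 * (n : ℤ) → f r = r + n + shift r)
    (hper : ∀ i, f (i + 2 * n) = f i + 2 * n) (hn : 1 ≤ n) :
    alignSet n f = (fun s : ℤ => (2 * s - 1, 2 * s)) '' Set.Icc 2 n := by
  ext p
  rw [mem_alignSet_iff hval hper hn]
  exact ⟨fun ⟨s, hs1, hs2, hp⟩ => ⟨s, ⟨hs1, hs2⟩, hp.symm⟩,
    fun ⟨s, ⟨hs1, hs2⟩, hp⟩ => ⟨s, hs1, hs2, hp.symm⟩⟩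

theorem ncard_alignSet
    (hval : ∀ r, 1 ≤ r → r ≤ 2 * (n : ℤ) → f r = r + n + shift r)
    (hper : ∀ i, f (i + 2 * n) = f i + 2 * n) (hn : 1 ≤ n) : (alignSet n f).ncard = n - 1 := by
  rw [alignSet_eq_image hval hper hn,
    Set.ncard_image_of_injective _ fun a b hab => by simpa using congrArg Prod.snd hab,
    ← coe_Icc, Set.ncard_coe_finset, Int.card_Icc]
  omega

theorem mirror_two_mul_sub_one
    (hval : ∀ r, 1 ≤ r → r ≤ 2 * (n : ℤ) → f r = r + n + shift r)
    {s : ℤ} (hs1 : 2 ≤ s) (hs2 : s ≤ n) :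
    mirror n f (2 * s - 1, 2 * s) = (2 * s - 1, 2 * s) := by
  have hodd : f (2 * s - 1) = 2 * s + n := by
    rw [hval _ (by omega) (by omega), shift_two_mul_sub_one hs1]; ring
  have heven : f (2 * s) = 2 * s + n - 1 := by
    rw [hval _ (by omega) (by omega), shift_two_mul hs1]; ring
  have hmod : (f (2 * s) + n - 1) % (2 * n) = 2 * s - 2 := by
    rw [heven, show 2 * s + n - 1 + n - 1 = 2 * s - 2 + 2 * n by ring, Int.add_emod_right]
    exact Int.emod_eq_of_lt (by omega) (by omega)
  rw [mirror]
  dsimp only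
  rw [hmod, hodd, heven, Prod.mk.injEq]
  constructor <;> ring

theorem mirror_eq_self
    (hval : ∀ r, 1 ≤ r → r ≤ 2 * (n : ℤ) → f r = r + n + shift r)
    (hper : ∀ i, f (i + 2 * n) = f i + 2 * n) (hn : 1 ≤ n) :
    ∀ p ∈ alignSet n f, mirror n f p = p := fun p hp => by
  obtain ⟨s, hs1, hs2, rfl⟩ := (mem_alignSet_iff hval hper hn p).1 hp
  exact mirror_two_mul_sub_one hval hs1 hs2

end PairSwap

/-- The permutation `f` with `f(1) = n+1`, `f(2) = n+2`, `f(2s−1) = n+2s` and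
`f(2s) = n+2s−1` for `2 ≤ s ≤ n`, extended `2n`-periodically, is a ρ-symmetric
bounded affine permutation of type `(n,2n)`; exactly two indices `i ∈ {1,…,2n}`
satisfy `f i = i+n`; its alignments with `1 ≤ i ≤ 2n` are exactly the pairs
`(2s−1, 2s)` for `2 ≤ s ≤ n`, each fixed by the mirror map; and `σℓ(f) = n−1`. -/
theorem stmt16 (n : ℕ) (hn : 1 ≤ n) (f : ℤ → ℤ)
    (hf1 : f 1 = (n : ℤ) + 1) (hf2 : f 2 = (n : ℤ) + 2)
    (hodd : ∀ s : ℤ, 2 ≤ s → s ≤ (n : ℤ) → f (2 * s - 1) = (n : ℤ) + 2 * s)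
    (heven : ∀ s : ℤ, 2 ≤ s → s ≤ (n : ℤ) → f (2 * s) = (n : ℤ) + 2 * s - 1)
    (hper : ∀ i : ℤ, f (i + 2 * (n : ℤ)) = f i + 2 * (n : ℤ)) :
    Function.Bijective f ∧
    (∀ i : ℤ, i ≤ f i ∧ f i ≤ i + 2 * (n : ℤ)) ∧
    (∑ i ∈ Finset.Icc (1 : ℤ) (2 * (n : ℤ)), (f i - i) = 2 * (n : ℤ) ^ 2) ∧
    (∀ i : ℤ, f (f i - (n : ℤ)) = i + (n : ℤ)) ∧
    ((Finset.Icc (1 : ℤ) (2 * (n : ℤ))).filter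
      (fun i => f i = i + (n : ℤ))).card = 2 ∧
    (∀ p : ℤ × ℤ, p ∈ alignSet n f ↔
      ∃ s : ℤ, 2 ≤ s ∧ s ≤ (n : ℤ) ∧ p = (2 * s - 1, 2 * s)) ∧
    (∀ p ∈ alignSet n f, mirror n f p = p) ∧
    sigmaL n f = n - 1 := by
  have hval := PairSwap.eq_add_shift hf1 hf2 hodd heven
  have hrho := PairSwap.map_map_sub_eq_add hval hper hn
  have hmirror := PairSwap.mirror_eq_self hval hper hn
  refine ⟨Function.bijective_of_map_map_sub_eq_add _ hrho, fun i => ?_,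
    PairSwap.sum_Icc_map_sub_self hval, hrho,
    by rw [PairSwap.filter_map_eq_add_eq hval hn]; rfl, PairSwap.mem_alignSet_iff hval hper hn,
    hmirror, by
      rw [sigmaL_eq_ncard_of_forall_mirror_eq_self hmirror, PairSwap.ncard_alignSet hval hper hn]⟩
  have := PairSwap.map_sub_self_mem_Icc hval hper hn i
  omega
end

section
/- Let f : ℤ → ℤ be a bijection with f(j+2n) = f(j)+2n and f(f(j)−n) = j+n for all j ∈ ℤ, and let i ∈ ℤ. Then g = f⋊s_i also satisfies g(g(j)−n) = j+n for all j ∈ ℤ; that is, the semidirect product of a ρ-symmetric affine permutation with a simple reflection is again ρ-symmetric. -/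
lemma dvd_contra {m a b : ℤ} (hm : 2 ≤ m) (ha : m ∣ a) (hb : m ∣ b)
    (hab : a - b = 1 ∨ b - a = 1) : False := by
  have h1 : m ∣ (a - b) := dvd_sub ha hb
  have h2 : m ∣ (b - a) := dvd_sub hb ha
  rcases hab with h | h
  · rw [h] at h1; have := Int.le_of_dvd one_pos h1; omega
  · rw [h] at h2; have := Int.le_of_dvd one_pos h2; omega

/-- `sRefl n i` is an involution. -/
lemma sRefl_invol (n : ℕ) (i j : ℤ) : sRefl n i (sRefl n i j) = j := by
  by_cases hn : n = 0
  · subst hn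
    simp only [sRefl, Nat.cast_zero, mul_zero, Int.emod_zero]
    split_ifs <;> omega
  · have hm2 : (2 : ℤ) ≤ 2 * (n : ℤ) := by omega
    simp only [sRefl, ← Int.dvd_iff_emod_eq_zero]
    by_cases h1 : (2 * (n : ℤ)) ∣ (j - i)
    · rw [if_pos h1, if_neg, if_pos]
      · ring
      · have : j + 1 - (i + 1) = j - i := by ring
        rw [this]; exact h1
      · intro h2
        exact dvd_contra hm2 h2 h1 (by left; ring)
    · rw [if_neg h1]
      by_cases h2 : (2 * (n : ℤ)) ∣ (j - (i + 1))
      · rw [if_pos h2, if_pos]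
        · ring
        · have : j - 1 - i = j - (i + 1) := by ring
          rw [this]; exact h2
      · rw [if_neg h2, if_neg h1, if_neg h2]

/-- `s_{i+n} = ρ ∘ s_i ∘ ρ⁻¹` where `ρ` is the shift by `n`. -/
lemma sRefl_shift (n : ℕ) (i j : ℤ) :
    sRefl n (i + (n : ℤ)) j = sRefl n i (j - (n : ℤ)) + (n : ℤ) := by
  unfold sRefl
  have e1 : j - (i + (n : ℤ)) = j - (n : ℤ) - i := by ring
  have e2 : j - (i + (n : ℤ) + 1) = j - (n : ℤ) - (i + 1) := by ring
  rw [e1, e2]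
  split_ifs <;> ring

/-- The semidirect product of a ρ-symmetric affine permutation of period `2n`
with a simple reflection is again ρ-symmetric. -/
theorem stmt18 (n : ℕ) (f : ℤ → ℤ)
    (hbij : Function.Bijective f)
    (hper : ∀ j : ℤ, f (j + 2 * (n : ℤ)) = f j + 2 * (n : ℤ))
    (hsym : ∀ j : ℤ, f (f j - (n : ℤ)) = j + (n : ℤ))
    (i : ℤ) :
    ∀ j : ℤ, semidirect n i f (semidirect n i f j - (n : ℤ)) = j + (n : ℤ) := by
  have hB : ∀ x : ℤ, sRefl n i (x - (n : ℤ)) = sRefl n (i + (n : ℤ)) x - (n : ℤ) := by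
    intro x; rw [sRefl_shift]; ring
  intro j
  unfold semidirect
  split_ifs with h
  · simp only [Function.comp_apply]
    rw [hB]
    have hj := congrFun h (sRefl n i j)
    simp only [Function.comp_apply] at hj
    rw [hj, sRefl_invol, hsym]
  · simp only [Function.comp_apply]
    have key : sRefl n i (sRefl n (i + (n : ℤ)) (f (sRefl n i j)) - (n : ℤ))
        = f (sRefl n i j) - (n : ℤ) := by
      rw [← hB, sRefl_invol]
    rw [key, hsym, sRefl_shift]
    simp [sRefl_invol]
end
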